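/- arXiv:1909.02876 — 6 statements merged into one kernel-verified Lean document; each statement's English description precedes it below -/
import Mathlib

section
/- Let (γ_n) be a nonnegative sequence converging to 0, and let (q_n) be a sequence with q_0 = 1, q_{i+1} ≤ q_i, q_i > 0, and q_i → 0. Suppose the series ∑_{i≥0} (1/q_{i+1} − 1/q_i) γ_i converges. If (ρ(n)) is a strictly increasing sequence of naturals such that γ_{ρ(n)} ≤ γ_j for all ρ(0) ≤ j ≤ ρ(n), then γ_{ρ(n)} / q_{ρ(n)+1} → 0 as n → ∞. -/
open Filter

theorem stmt_1 (γ q : ℕ → ℝ) (hγ : ∀ n, 0 ≤ γ n)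
    (hγlim : Tendsto γ atTop (nhds 0))
    (hq0 : q 0 = 1) (hqdec : ∀ i, q (i + 1) ≤ q i) (hqpos : ∀ i, 0 < q i)
    (hqlim : Tendsto q atTop (nhds 0))
    (hsum : Summable fun i => (1 / q (i + 1) - 1 / q i) * γ i)
    (ρ : ℕ → ℕ) (hρ : StrictMono ρ)
    (hmin : ∀ n j, ρ 0 ≤ j → j ≤ ρ n → γ (ρ n) ≤ γ j) :
    Tendsto (fun n => γ (ρ n) / q (ρ n + 1)) atTop (nhds 0) := by
  have hsub : ∀ i, 0 ≤ 1 / q (i + 1) - 1 / q i := fun i =>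
    sub_nonneg.2 (one_div_le_one_div_of_le (hqpos (i+1)) (hqdec i))
  have hterm : ∀ i, 0 ≤ (1 / q (i + 1) - 1 / q i) * γ i := fun i =>
    mul_nonneg (hsub i) (hγ i)
  have hρtop : Tendsto ρ atTop atTop := hρ.tendsto_atTop
  have hγρ : Tendsto (fun n => γ (ρ n)) atTop (nhds 0) := hγlim.comp hρtop
  have htail : Tendsto (fun m => ∑' i, (1 / q (i + m + 1) - 1 / q (i + m)) * γ (i + m))
      atTop (nhds 0) := tendsto_sum_nat_add (fun i => (1 / q (i + 1) - 1 / q i) * γ i)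
  rw [Metric.tendsto_atTop]
  intro ε hε
  obtain ⟨m, hm1, hm2⟩ : ∃ m, ρ 0 ≤ m ∧
      ∑' i, (1 / q (i + m + 1) - 1 / q (i + m)) * γ (i + m) < ε / 2 := by
    obtain ⟨m, h1, h2⟩ :=
      ((htail.eventually (gt_mem_nhds (half_pos hε))).and (eventually_ge_atTop (ρ 0))).exists
    exact ⟨m, h2, h1⟩
  have key : ∀ n, m ≤ ρ n → γ (ρ n) * (1 / q (ρ n + 1) - 1 / q m) ≤
      ∑' i, (1 / q (i + m + 1) - 1 / q (i + m)) * γ (i + m) := by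
    intro n hn
    have h1 : γ (ρ n) * (1 / q (ρ n + 1) - 1 / q m)
        = ∑ i ∈ Finset.Ico m (ρ n + 1), γ (ρ n) * (1 / q (i + 1) - 1 / q i) := by
      rw [← Finset.mul_sum]
      congr 1
      rw [Finset.sum_Ico_eq_sub _ (by omega),
        Finset.sum_range_sub (fun i => 1 / q i), Finset.sum_range_sub (fun i => 1 / q i)]
      ring
    rw [h1]
    have h2 : ∑ i ∈ Finset.Ico m (ρ n + 1), γ (ρ n) * (1 / q (i + 1) - 1 / q i)
        ≤ ∑ i ∈ Finset.Ico m (ρ n + 1), (1 / q (i + 1) - 1 / q i) * γ i := by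
      apply Finset.sum_le_sum
      intro i hi
      simp only [Finset.mem_Ico] at hi
      rw [mul_comm]
      exact mul_le_mul_of_nonneg_left (hmin n i (le_trans hm1 hi.1) (by omega)) (hsub i)
    refine h2.trans ?_
    rw [Finset.sum_Ico_eq_sum_range]
    have h3 : ∀ i ∈ Finset.range (ρ n + 1 - m),
        (1 / q (m + i + 1) - 1 / q (m + i)) * γ (m + i)
          = (fun i => (1 / q (i + m + 1) - 1 / q (i + m)) * γ (i + m)) i := by
      intro i _
      simp [add_comm m i]
    rw [Finset.sum_congr rfl h3]
    exact Summable.sum_le_tsum _ (fun i _ => by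
        simpa [add_comm] using hterm (i + m))
      ((summable_nat_add_iff m).2 hsum)
  have h2 : Tendsto (fun n => γ (ρ n) * (1 / q m)) atTop (nhds 0) := by
    simpa using hγρ.mul_const (1 / q m)
  have h3 := (h2.eventually (gt_mem_nhds (half_pos hε))).and
    (hρtop.eventually (eventually_ge_atTop m))
  obtain ⟨N, hN⟩ := h3.exists_forall_of_atTop
  refine ⟨N, fun n hn => ?_⟩
  obtain ⟨hn1, hn2⟩ := hN n hn
  have hpos : 0 ≤ γ (ρ n) / q (ρ n + 1) := div_nonneg (hγ _) (hqpos _).le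
  rw [Real.dist_eq, sub_zero, abs_of_nonneg hpos]
  have := key n hn2
  have hcalc : γ (ρ n) / q (ρ n + 1) ≤
      (∑' i, (1 / q (i + m + 1) - 1 / q (i + m)) * γ (i + m)) + γ (ρ n) * (1 / q m) := by
    have : γ (ρ n) * (1 / q (ρ n + 1)) ≤
        (∑' i, (1 / q (i + m + 1) - 1 / q (i + m)) * γ (i + m)) + γ (ρ n) * (1 / q m) := by
      nlinarith [key n hn2]
    rw [div_eq_mul_one_div]
    exact this
  calc γ (ρ n) / q (ρ n + 1) ≤ _ := hcalc
    _ < ε / 2 + ε / 2 := by exact add_lt_add hm2 hn1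
    _ = ε := by ring
end

section
/- If a decreasing positive sequence (γ_n) tends to 0, q is in A, and the series ∑_{i≥0} (γ_i − γ_{i+1})/q_i converges, then γ_m / q_m → 0 as m → ∞. -/
open Filter

theorem stmt_3 (γ q : ℕ → ℝ) (hγpos : ∀ n, 0 < γ n)
    (hγdec : ∀ n, γ (n + 1) ≤ γ n) (hγlim : Tendsto γ atTop (nhds 0))
    (hq0 : q 0 = 1) (hqdec : ∀ i, q (i + 1) ≤ q i) (hqpos : ∀ i, 0 < q i)
    (hqlim : Tendsto q atTop (nhds 0))
    (hsum : Summable fun i => (γ i - γ (i + 1)) / q i) :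
    Tendsto (fun m => γ m / q m) atTop (nhds 0) := by
  set f : ℕ → ℝ := fun i => (γ i - γ (i + 1)) / q i with hf
  have hqanti : Antitone q := antitone_nat_of_succ_le hqdec
  have hqmono : ∀ m k, q (k + m) ≤ q m := fun m k => hqanti (Nat.le_add_left m k)
  have hf0 : ∀ i, 0 ≤ f i := fun i =>
    div_nonneg (sub_nonneg.2 (hγdec i)) (hqpos i).le
  have htail : Tendsto (fun m => ∑' k, f (k + m)) atTop (nhds 0) :=
    tendsto_sum_nat_add f
  have hsumtail : ∀ m, Summable fun k => f (k + m) := fun m =>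
    (summable_nat_add_iff m).2 hsum
  have hupper : ∀ m, γ m / q m ≤ ∑' k, f (k + m) := by
    intro m
    have hpart : ∀ n, (γ m - γ (n + m)) / q m ≤ ∑' k, f (k + m) := by
      intro n
      have h1 : (γ m - γ (n + m)) / q m
          = ∑ k ∈ Finset.range n, (γ (k + m) - γ (k + 1 + m)) / q m := by
        rw [← Finset.sum_div]
        congr 1
        have := Finset.sum_range_sub' (fun k => γ (k + m)) n
        simpa using this.symm
      rw [h1]
      refine le_trans (Finset.sum_le_sum ?_) (Summable.sum_le_tsum _
        (fun k _ => hf0 _) (hsumtail m))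
      intro k _
      have hnum : 0 ≤ γ (k + m) - γ (k + 1 + m) := by
        have := hγdec (k + m)
        have h2 : k + m + 1 = k + 1 + m := by ring
        rw [h2] at this
        linarith
      have : (γ (k + m) - γ (k + 1 + m)) / q m ≤
          (γ (k + m) - γ (k + 1 + m)) / q (k + m) :=
        div_le_div_of_nonneg_left hnum (hqpos _) (hqmono m k)
      refine this.trans_eq ?_
      simp only [hf]
      congr 2
      ring
    have hlim : Tendsto (fun n => (γ m - γ (n + m)) / q m) atTop
        (nhds (γ m / q m)) := by
      have : Tendsto (fun n : ℕ => γ (n + m)) atTop (nhds 0) :=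
        hγlim.comp (tendsto_atTop_atTop.2 fun b => ⟨b, fun a ha => le_trans ha (Nat.le_add_right a m)⟩)
      have := ((tendsto_const_nhds (x := γ m)).sub this).div_const (q m)
      simpa using this
    exact le_of_tendsto hlim (Eventually.of_forall hpart)
  refine tendsto_of_tendsto_of_tendsto_of_le_of_le tendsto_const_nhds htail
    (fun m => (div_pos (hγpos m) (hqpos m)).le) hupper
end

section
/- Let (Y_n)_{n≥0} be square-integrable real random variables converging in L² to a square-integrable random variable Y, with Y_{−1} = 0 by convention. Let q ∈ A (q_0 = 1, q decreasing, positive, q_i → 0), and let N be an ℕ-valued random variable independent of (Y_i) with P(N ≥ i) = q_i. Define the coupled sum estimator Z̄ = ∑_{i=0}^{N} (Y_i − Y_{i−1})/q_i. Then Z̄ is square-integrable if and only if ∑_{i≥0} (1/q_{i+1} − 1/q_i) E[(Y_i − Y)²] < ∞. -/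
open MeasureTheory ProbabilityTheory Filter

/-- The increments `Δ_k = Y_k - Y_{k-1}` with the convention `Y_{-1} = 0`. -/
noncomputable def diffSeq {Ω : Type*} (Y : ℕ → Ω → ℝ) : ℕ → Ω → ℝ :=
  fun k ω => Y k ω - if k = 0 then 0 else Y (k - 1) ω

/-- The coupled sum estimator `Z̄ = ∑_{i=0}^N (Y_i - Y_{i-1}) / q_i`. -/
noncomputable def coupledSum {Ω : Type*} (Y : ℕ → Ω → ℝ) (q : ℕ → ℝ)
    (N : Ω → ℕ) : Ω → ℝ :=
  fun ω => ∑ k ∈ Finset.range (N ω + 1), diffSeq Y k ω / q k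

open Finset
open scoped ENNReal

/-!
With `s_n = ∑_{k ≤ n} (y_k - y_{k-1}) / q_k` the partial sums along a path `y`, independence gives
`E[Z̄²] = ∑ₙ P(N = n) E[s_n²] = ∑ₙ (q_n - q_{n+1}) E[s_n²]`. Abel summation yields the pathwise
identity `∑_{n ≤ m} (q_n - q_{n+1}) s_n² + q_{m+1} s_m² = y_m² / q_0 + ∑_{i < m} w_i (y_i - y_m)²`
with `w_i = 1/q_{i+1} - 1/q_i`. Since `q → 0`, the series `∑ (q_m / q_{m+1} - 1)` diverges, so
summability of either side of the theorem forces the boundary term (`q_{m+1} E[s_m²] < 1`, resp.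
`E[(Y_m - Y)²] < q_m`) to be small infinitely often; along those `m` the expected identity
bounds the partial sums of the other series, using `E[(Y_i - Y_m)²] → E[(Y_i - Y)²]`.
-/

noncomputable def coupledPartialSum (q : ℕ → ℝ) (n : ℕ) (y : ℕ → ℝ) : ℝ :=
  ∑ k ∈ range (n + 1), (y k - if k = 0 then 0 else y (k - 1)) / q k

theorem coupledSum_eq_coupledPartialSum {Ω : Type*} (Y : ℕ → Ω → ℝ) (q : ℕ → ℝ)
    (N : Ω → ℕ) (ω : Ω) : coupledSum Y q N ω = coupledPartialSum q (N ω) (fun k => Y k ω) :=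
  rfl

section Algebra

variable (q y : ℕ → ℝ)

theorem coupledPartialSum_zero : coupledPartialSum q 0 y = y 0 / q 0 := by
  simp [coupledPartialSum]

theorem coupledPartialSum_succ (n : ℕ) :
    coupledPartialSum q (n + 1) y = coupledPartialSum q n y + (y (n + 1) - y n) / q (n + 1) := by
  simp [coupledPartialSum, sum_range_succ _ (n + 1)]

theorem sum_range_inv_sub_inv_mul (n : ℕ) :
    ∑ i ∈ range n, (1 / q (i + 1) - 1 / q i) * y i = y n / q n - coupledPartialSum q n y := by
  induction n with
  | zero => simp [coupledPartialSum_zero]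
  | succ n ih => rw [sum_range_succ, ih, coupledPartialSum_succ]; ring

theorem sum_range_mul_sq_coupledPartialSum (hq : ∀ i, q i ≠ 0) (m : ℕ) :
    ∑ n ∈ range (m + 1), (q n - q (n + 1)) * coupledPartialSum q n y ^ 2
        + q (m + 1) * coupledPartialSum q m y ^ 2
      = y m ^ 2 / q 0 + ∑ i ∈ range m, (1 / q (i + 1) - 1 / q i) * (y i - y m) ^ 2 := by
  induction m with
  | zero =>
    have := hq 0
    simp only [zero_add, sum_range_one, coupledPartialSum_zero, range_zero, sum_empty]
    field_simp
    ring
  | succ m ih =>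
    -- Replacing `y m` by `y (m + 1)` only brings in `∑ wᵢ yᵢ` (Abel) and `∑ wᵢ` (telescoping).
    have hshift : ∑ i ∈ range m, (1 / q (i + 1) - 1 / q i) * (y i - y (m + 1)) ^ 2
        = ∑ i ∈ range m, (1 / q (i + 1) - 1 / q i) * (y i - y m) ^ 2
          + (y m - y (m + 1)) * (2 * ∑ i ∈ range m, (1 / q (i + 1) - 1 / q i) * y i
            - (y m + y (m + 1)) * ∑ i ∈ range m, (1 / q (i + 1) - 1 / q i)) := by
      rw [← sub_eq_iff_eq_add', ← sum_sub_distrib, mul_sum, mul_sum, ← sum_sub_distrib,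
        mul_sum]
      exact sum_congr rfl fun i _ => by ring
    rw [sum_range_succ (fun n => (q n - q (n + 1)) * coupledPartialSum q n y ^ 2) (m + 1),
      sum_range_succ (fun i => (1 / q (i + 1) - 1 / q i) * (y i - y (m + 1)) ^ 2) m, hshift,
      sum_range_inv_sub_inv_mul q y m, sum_range_sub (fun i => 1 / q i), coupledPartialSum_succ]
    have := hq m
    have := hq (m + 1)
    field_simp
    linear_combination q (m + 1) ^ 2 * q m * ih

theorem measurable_coupledPartialSum (n : ℕ) : Measurable (coupledPartialSum q n) := by
  refine measurable_sum _ fun k _ => Measurable.div_const ?_ _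
  split_ifs <;> fun_prop

end Algebra

section Asymptotics

variable {q : ℕ → ℝ}

theorem not_summable_div_succ_sub_one (hqpos : ∀ i, 0 < q i) (hqdec : ∀ i, q (i + 1) ≤ q i)
    (hqlim : Tendsto q atTop (nhds 0)) : ¬ Summable fun m => q m / q (m + 1) - 1 := by
  intro hsum
  have hlog : Summable fun m => Real.log (q m) - Real.log (q (m + 1)) := by
    refine hsum.of_nonneg_of_le (fun m => sub_nonneg.2 (Real.log_le_log (hqpos _) (hqdec m)))
      fun m => ?_
    rw [← Real.log_div (hqpos m).ne' (hqpos (m + 1)).ne']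
    exact Real.log_le_sub_one_of_pos (div_pos (hqpos m) (hqpos (m + 1)))
  have hpartial := hlog.tendsto_sum_tsum_nat
  simp only [sum_range_sub' (fun m => Real.log (q m))] at hpartial
  have hq0 : Tendsto q atTop (nhdsWithin 0 (Set.Ioi 0)) :=
    tendsto_nhdsWithin_of_tendsto_nhds_of_eventually_within _ hqlim (.of_forall hqpos)
  have hdiv : Tendsto (fun n => Real.log (q 0) - Real.log (q n)) atTop atTop := by
    simp only [sub_eq_add_neg]
    exact tendsto_atTop_add_const_left _ _
      (tendsto_neg_atBot_atTop.comp (Real.tendsto_log_nhdsGT_zero.comp hq0))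
  exact not_tendsto_nhds_of_tendsto_atTop hdiv _ hpartial

theorem frequently_lt_div_succ_sub_one (hqpos : ∀ i, 0 < q i) (hqdec : ∀ i, q (i + 1) ≤ q i)
    (hqlim : Tendsto q atTop (nhds 0)) {u : ℕ → ℝ} (hu : Summable u) :
    ∃ᶠ m in atTop, u m < q m / q (m + 1) - 1 := by
  by_contra h
  simp only [not_frequently, not_lt] at h
  refine not_summable_div_succ_sub_one hqpos hqdec hqlim (hu.of_norm_bounded_eventually_nat ?_)
  filter_upwards [h] with m hm
  rwa [Real.norm_of_nonneg (sub_nonneg.2 ((one_le_div (hqpos _)).2 (hqdec m)))]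

theorem summable_inv_sub_inv_mul_of_summable (hqpos : ∀ i, 0 < q i)
    (hqdec : ∀ i, q (i + 1) ≤ q i) (hqlim : Tendsto q atTop (nhds 0)) {a b : ℕ → ℝ}
    {d : ℕ → ℕ → ℝ} (hb : ∀ n, 0 ≤ b n) (hd : ∀ i m, 0 ≤ d i m)
    (hda : ∀ i, Tendsto (d i) atTop (nhds (a i)))
    (hle : ∀ m, ∑ i ∈ range m, (1 / q (i + 1) - 1 / q i) * d i m
      ≤ ∑ n ∈ range (m + 1), (q n - q (n + 1)) * b n + q (m + 1) * b m)
    (hsum : Summable fun n => (q n - q (n + 1)) * b n) :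
    Summable fun i => (1 / q (i + 1) - 1 / q i) * a i := by
  have hr : ∀ n, 0 ≤ q n - q (n + 1) := fun n => sub_nonneg.2 (hqdec n)
  have hw : ∀ i, 0 ≤ 1 / q (i + 1) - 1 / q i := fun i =>
    sub_nonneg.2 (one_div_le_one_div_of_le (hqpos _) (hqdec i))
  have hfreq : ∃ᶠ m in atTop, q (m + 1) * b m < 1 := by
    refine (frequently_lt_div_succ_sub_one hqpos hqdec hqlim hsum).mono fun m hm => ?_
    rw [show q m / q (m + 1) - 1 = (q m - q (m + 1)) / q (m + 1) by
      field_simp [(hqpos (m + 1)).ne'], lt_div_iff₀ (hqpos _)] at hm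
    nlinarith [hr m]
  refine summable_of_sum_range_le (fun i => mul_nonneg (hw i) (ge_of_tendsto' (hda i) (hd i)))
    (c := ∑' n, (q n - q (n + 1)) * b n + 1) fun M => ?_
  refine isClosed_Iic.mem_of_frequently_of_tendsto ?_
    (tendsto_finsetSum (range M) fun i _ => (hda i).const_mul _)
  refine (hfreq.and_eventually (eventually_ge_atTop M)).mono fun m ⟨hqb, hMm⟩ => ?_
  calc ∑ i ∈ range M, (1 / q (i + 1) - 1 / q i) * d i m
      ≤ ∑ i ∈ range m, (1 / q (i + 1) - 1 / q i) * d i m :=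
        sum_le_sum_of_subset_of_nonneg (range_subset_range.2 hMm)
          fun i _ _ => mul_nonneg (hw i) (hd i m)
    _ ≤ ∑ n ∈ range (m + 1), (q n - q (n + 1)) * b n + q (m + 1) * b m := hle m
    _ ≤ ∑' n, (q n - q (n + 1)) * b n + 1 :=
        add_le_add (hsum.sum_le_tsum _ fun n _ => mul_nonneg (hr n) (hb n)) hqb.le

theorem summable_sub_mul_of_summable (hqpos : ∀ i, 0 < q i)
    (hqdec : ∀ i, q (i + 1) ≤ q i) (hqlim : Tendsto q atTop (nhds 0)) {a b : ℕ → ℝ}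
    {d : ℕ → ℕ → ℝ} (C : ℝ) (ha : ∀ i, 0 ≤ a i) (hb : ∀ n, 0 ≤ b n)
    (hd : ∀ i m, d i m ≤ 2 * a i + 2 * a m)
    (hle : ∀ m, ∑ n ∈ range (m + 1), (q n - q (n + 1)) * b n
      ≤ C + ∑ i ∈ range m, (1 / q (i + 1) - 1 / q i) * d i m)
    (hsum : Summable fun i => (1 / q (i + 1) - 1 / q i) * a i) :
    Summable fun n => (q n - q (n + 1)) * b n := by
  have hr : ∀ n, 0 ≤ q n - q (n + 1) := fun n => sub_nonneg.2 (hqdec n)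
  have hw : ∀ i, 0 ≤ 1 / q (i + 1) - 1 / q i := fun i =>
    sub_nonneg.2 (one_div_le_one_div_of_le (hqpos _) (hqdec i))
  have hfreq : ∃ᶠ m in atTop, a m < q m := by
    refine (frequently_lt_div_succ_sub_one hqpos hqdec hqlim hsum).mono fun m hm => ?_
    rw [show q m / q (m + 1) - 1 = (1 / q (m + 1) - 1 / q m) * q m by
      field_simp [(hqpos m).ne', (hqpos (m + 1)).ne']] at hm
    exact lt_of_mul_lt_mul_left hm (hw m)
  refine summable_of_sum_range_le (fun n => mul_nonneg (hr n) (hb n))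
    (c := C + 2 * ∑' i, (1 / q (i + 1) - 1 / q i) * a i + 2) fun M => ?_
  obtain ⟨m, hMm, ham⟩ := frequently_atTop.1 hfreq M
  have ham' : a m * (1 / q m - 1 / q 0) ≤ 1 := by
    have : a m / q m < 1 := (div_lt_one (hqpos m)).2 ham
    have : 0 ≤ a m / q 0 := div_nonneg (ha m) (hqpos 0).le
    rw [mul_sub, ← div_eq_mul_one_div, ← div_eq_mul_one_div]
    linarith
  calc ∑ n ∈ range M, (q n - q (n + 1)) * b n
      ≤ ∑ n ∈ range (m + 1), (q n - q (n + 1)) * b n :=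
        sum_le_sum_of_subset_of_nonneg (range_subset_range.2 (by omega))
          fun n _ _ => mul_nonneg (hr n) (hb n)
    _ ≤ C + ∑ i ∈ range m, (1 / q (i + 1) - 1 / q i) * d i m := hle m
    _ ≤ C + ∑ i ∈ range m, (2 * ((1 / q (i + 1) - 1 / q i) * a i)
          + 2 * a m * (1 / q (i + 1) - 1 / q i)) := by
        gcongr with i
        nlinarith [hw i, hd i m]
    _ = C + 2 * ∑ i ∈ range m, (1 / q (i + 1) - 1 / q i) * a i
          + 2 * (a m * (1 / q m - 1 / q 0)) := by
        rw [sum_add_distrib, ← mul_sum, ← mul_sum, sum_range_sub (fun i => 1 / q i)]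
        ring
    _ ≤ C + 2 * ∑' i, (1 / q (i + 1) - 1 / q i) * a i + 2 := by
        gcongr
        · exact hsum.sum_le_tsum _ fun i _ => mul_nonneg (hw i) (ha i)
        · linarith

end Asymptotics

section SquareIntegrable

variable {Ω : Type*} [MeasurableSpace Ω] {μ : Measure Ω}

theorem MeasureTheory.MemLp.norm_toLp_sub_toLp_sq {f g : Ω → ℝ} (hf : MemLp f 2 μ)
    (hg : MemLp g 2 μ) :
    ‖hf.toLp f - hg.toLp g‖ ^ 2 = ∫ ω, (f ω - g ω) ^ 2 ∂μ := by
  rw [← MemLp.toLp_sub, ← real_inner_self_eq_norm_sq, L2.inner_def]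
  refine integral_congr_ae ?_
  filter_upwards [(hf.sub hg).coeFn_toLp] with ω hω
  rw [hω]
  simp [sq]

theorem tendsto_integral_sq_sub {f : ℕ → Ω → ℝ} {g h : Ω → ℝ}
    (hf : ∀ n, MemLp (f n) 2 μ) (hg : MemLp g 2 μ) (hh : MemLp h 2 μ)
    (hfg : Tendsto (fun n => ∫ ω, (f n ω - g ω) ^ 2 ∂μ) atTop (nhds 0)) :
    Tendsto (fun n => ∫ ω, (h ω - f n ω) ^ 2 ∂μ) atTop
      (nhds (∫ ω, (h ω - g ω) ^ 2 ∂μ)) := by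
  have hconv : Tendsto (fun n => (hf n).toLp (f n)) atTop (nhds (hg.toLp g)) := by
    rw [tendsto_iff_norm_sub_tendsto_zero]
    simpa [← (hf _).norm_toLp_sub_toLp_sq hg, Real.sqrt_sq (norm_nonneg _)] using hfg.sqrt
  simpa only [← hh.norm_toLp_sub_toLp_sq (hf _), ← hh.norm_toLp_sub_toLp_sq hg] using
    ((tendsto_const_nhds (x := hh.toLp h)).sub hconv).norm.pow 2

theorem integral_sq_sub_le {f g h : Ω → ℝ} (hf : MemLp f 2 μ) (hg : MemLp g 2 μ)
    (hh : MemLp h 2 μ) :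
    ∫ ω, (f ω - g ω) ^ 2 ∂μ
      ≤ 2 * ∫ ω, (f ω - h ω) ^ 2 ∂μ + 2 * ∫ ω, (g ω - h ω) ^ 2 ∂μ := by
  have hfh : Integrable (fun ω => 2 * (f ω - h ω) ^ 2) μ :=
    ((hf.sub hh).integrable_sq).const_mul 2
  have hgh : Integrable (fun ω => 2 * (g ω - h ω) ^ 2) μ :=
    ((hg.sub hh).integrable_sq).const_mul 2
  calc ∫ ω, (f ω - g ω) ^ 2 ∂μ
      ≤ ∫ ω, (2 * (f ω - h ω) ^ 2 + 2 * (g ω - h ω) ^ 2) ∂μ :=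
        integral_mono (hf.sub hg).integrable_sq (hfh.add hgh) fun ω => by
          nlinarith [sq_nonneg (f ω + g ω - 2 * h ω)]
    _ = 2 * ∫ ω, (f ω - h ω) ^ 2 ∂μ + 2 * ∫ ω, (g ω - h ω) ^ 2 ∂μ := by
        rw [integral_add hfh hgh, integral_const_mul, integral_const_mul]

end SquareIntegrable

theorem ENNReal.tsum_ofReal_ne_top_iff_summable {ι : Type*} {f : ι → ℝ} (hf : ∀ i, 0 ≤ f i) :
    ∑' i, ENNReal.ofReal (f i) ≠ ⊤ ↔ Summable f :=
  ⟨fun h => by simpa [ENNReal.toReal_ofReal (hf _)] using ENNReal.summable_toReal h,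
    Summable.tsum_ofReal_ne_top⟩

section Probability

variable {Ω : Type*} [MeasurableSpace Ω] {μ : Measure Ω}

theorem measure_preimage_singleton_eq_ofReal_sub {N : Ω → ℕ} (hN : Measurable N) {q : ℕ → ℝ}
    (hq : ∀ i, 0 ≤ q i) (htail : ∀ i, μ {ω | i ≤ N ω} = ENNReal.ofReal (q i)) (n : ℕ) :
    μ (N ⁻¹' {n}) = ENNReal.ofReal (q n - q (n + 1)) := by
  have hset : N ⁻¹' {n} = {ω | n ≤ N ω} \ {ω | n + 1 ≤ N ω} := by
    ext ω
    simp only [Set.mem_preimage, Set.mem_singleton_iff, Set.mem_ofPred_eq, Set.mem_sdiff]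
    omega
  have hsub : {ω | n + 1 ≤ N ω} ⊆ {ω | n ≤ N ω} := fun ω h => n.le_succ.trans h
  rw [hset, measure_sdiff hsub (hN measurableSet_Ici).nullMeasurableSet
    (by rw [htail]; exact ENNReal.ofReal_ne_top), htail, htail, ENNReal.ofReal_sub _ (hq _)]

theorem lintegral_eq_tsum_measure_mul_of_indepFun {β : Type*} [MeasurableSpace β] {X : Ω → β}
    {N : Ω → ℕ} (hX : Measurable X) (hN : Measurable N) (hXN : IndepFun X N μ)
    {f : ℕ → β → ℝ≥0∞} (hf : ∀ n, Measurable (f n)) :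
    ∫⁻ ω, f (N ω) (X ω) ∂μ = ∑' n, μ (N ⁻¹' {n}) * ∫⁻ ω, f n (X ω) ∂μ := by
  have hind : ∀ n, Measurable (({n} : Set ℕ).indicator (1 : ℕ → ℝ≥0∞)) := fun _ =>
    measurable_from_top
  have hsplit : ∀ ω, f (N ω) (X ω)
      = ∑' n, ((f n ∘ X) * (({n} : Set ℕ).indicator (1 : ℕ → ℝ≥0∞) ∘ N)) ω := by
    intro ω
    rw [tsum_eq_single (N ω) fun n hn => by simp [Ne.symm hn]]
    simp
  rw [lintegral_congr hsplit,
    lintegral_tsum fun n => (((hf n).comp hX).mul ((hind n).comp hN)).aemeasurable]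
  refine tsum_congr fun n => ?_
  rw [lintegral_mul_eq_lintegral_mul_lintegral_of_indepFun ((hf n).comp hX) ((hind n).comp hN)
    (hXN.comp (hf n) (hind n)), mul_comm]
  congr 1
  simp_rw [Function.comp_apply, ← Set.indicator_comp_right]
  exact lintegral_indicator_one (hN (measurableSet_singleton n))

theorem memLp_coupledPartialSum {p : ℝ≥0∞} {Y : ℕ → Ω → ℝ} (hY : ∀ n, MemLp (Y n) p μ)
    (q : ℕ → ℝ) (n : ℕ) : MemLp (fun ω => coupledPartialSum q n (fun k => Y k ω)) p μ := by
  refine memLp_finsetSum _ fun k _ => ?_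
  simp only [div_eq_mul_inv]
  refine MemLp.mul_const ?_ _
  by_cases hk : k = 0
  · simpa [hk] using hY 0
  · simp only [hk, if_false]
    exact (hY k).sub (hY (k - 1))

theorem sum_range_mul_integral_sq_coupledPartialSum {Y : ℕ → Ω → ℝ}
    (hY : ∀ n, MemLp (Y n) 2 μ) {q : ℕ → ℝ} (hq : ∀ i, q i ≠ 0) (m : ℕ) :
    ∑ n ∈ range (m + 1),
          (q n - q (n + 1)) * ∫ ω, coupledPartialSum q n (fun k => Y k ω) ^ 2 ∂μ
        + q (m + 1) * ∫ ω, coupledPartialSum q m (fun k => Y k ω) ^ 2 ∂μ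
      = (∫ ω, Y m ω ^ 2 ∂μ) / q 0
        + ∑ i ∈ range m, (1 / q (i + 1) - 1 / q i) * ∫ ω, (Y i ω - Y m ω) ^ 2 ∂μ := by
  have hs := fun n => (memLp_coupledPartialSum hY q n).integrable_sq
  have hd : ∀ i, Integrable (fun ω => (Y i ω - Y m ω) ^ 2) μ := fun i =>
    ((hY i).sub (hY m)).integrable_sq
  calc _ = ∫ ω, (∑ n ∈ range (m + 1),
            (q n - q (n + 1)) * coupledPartialSum q n (fun k => Y k ω) ^ 2
          + q (m + 1) * coupledPartialSum q m (fun k => Y k ω) ^ 2) ∂μ := by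
        rw [integral_add (integrable_finsetSum _ fun n _ => (hs n).const_mul _)
          ((hs m).const_mul _), integral_finsetSum _ fun n _ => (hs n).const_mul _]
        simp only [integral_const_mul]
    _ = ∫ ω, (Y m ω ^ 2 / q 0
          + ∑ i ∈ range m, (1 / q (i + 1) - 1 / q i) * (Y i ω - Y m ω) ^ 2) ∂μ :=
        integral_congr_ae (.of_forall fun ω => sum_range_mul_sq_coupledPartialSum _ _ hq m)
    _ = _ := by
        rw [integral_add ((hY m).integrable_sq.div_const _)
          (integrable_finsetSum _ fun i _ => (hd i).const_mul _),
          integral_finsetSum _ fun i _ => (hd i).const_mul _, integral_div]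
        simp only [integral_const_mul]

theorem memLp_two_coupledSum_iff {Y : ℕ → Ω → ℝ} (hYmeas : ∀ n, Measurable (Y n))
    (hY : ∀ n, MemLp (Y n) 2 μ) {q : ℕ → ℝ} (hq : ∀ i, 0 ≤ q i) (hqdec : ∀ i, q (i + 1) ≤ q i)
    {N : Ω → ℕ} (hN : Measurable N) (hindep : IndepFun (fun ω i => Y i ω) N μ)
    (htail : ∀ i, μ {ω | i ≤ N ω} = ENNReal.ofReal (q i)) :
    MemLp (coupledSum Y q N) 2 μ ↔
      Summable fun n =>
        (q n - q (n + 1)) * ∫ ω, coupledPartialSum q n (fun k => Y k ω) ^ 2 ∂μ := by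
  have hX : Measurable fun ω i => Y i ω := measurable_pi_lambda _ hYmeas
  have hZ : Measurable (coupledSum Y q N) :=
    (measurable_from_prod_countable_left
      (f := fun p : Ω × ℕ => coupledPartialSum q p.2 (fun k => Y k p.1)) fun n =>
        (measurable_coupledPartialSum q n).comp hX).comp (measurable_id.prodMk hN)
  have hterm : ∀ n, μ (N ⁻¹' {n})
      * ∫⁻ ω, ENNReal.ofReal (coupledPartialSum q n (fun k => Y k ω) ^ 2) ∂μ
      = ENNReal.ofReal ((q n - q (n + 1))
          * ∫ ω, coupledPartialSum q n (fun k => Y k ω) ^ 2 ∂μ) := fun n => by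
    rw [measure_preimage_singleton_eq_ofReal_sub hN hq htail,
      ← ofReal_integral_eq_lintegral_ofReal (memLp_coupledPartialSum hY q n).integrable_sq
        (.of_forall fun ω => sq_nonneg _),
      ← ENNReal.ofReal_mul (sub_nonneg.2 (hqdec n))]
  rw [memLp_two_iff_integrable_sq hZ.aestronglyMeasurable,
    ← lintegral_ofReal_ne_top_iff_integrable (hZ.pow_const 2).aestronglyMeasurable
      (.of_forall fun ω => sq_nonneg _)]
  simp only [coupledSum_eq_coupledPartialSum]
  have hf : ∀ n, Measurable fun v => ENNReal.ofReal (coupledPartialSum q n v ^ 2) := fun n =>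
    ((measurable_coupledPartialSum q n).pow_const 2).ennreal_ofReal
  rw [lintegral_eq_tsum_measure_mul_of_indepFun hX hN hindep hf, tsum_congr hterm,
    ENNReal.tsum_ofReal_ne_top_iff_summable]
  exact fun n => mul_nonneg (sub_nonneg.2 (hqdec n)) (integral_nonneg fun ω => sq_nonneg _)

end Probability

theorem stmt_6_general {Ω : Type*} [MeasurableSpace Ω] (μ : Measure Ω)
    (Y : ℕ → Ω → ℝ) (Ylim : Ω → ℝ)
    (hYmeas : ∀ n, Measurable (Y n))
    (hY : ∀ n, MemLp (Y n) 2 μ) (hYlim : MemLp Ylim 2 μ)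
    (hconv : Tendsto (fun n => ∫ ω, (Y n ω - Ylim ω) ^ 2 ∂μ) atTop (nhds 0))
    (q : ℕ → ℝ) (hqdec : ∀ i, q (i + 1) ≤ q i)
    (hqpos : ∀ i, 0 < q i) (hqlim : Tendsto q atTop (nhds 0))
    (N : Ω → ℕ) (hNmeas : Measurable N)
    (hindep : IndepFun (fun ω i => Y i ω) N μ)
    (hN : ∀ i, μ {ω | i ≤ N ω} = ENNReal.ofReal (q i)) :
    MemLp (coupledSum Y q N) 2 μ ↔
      Summable (fun i => (1 / q (i + 1) - 1 / q i) * ∫ ω, (Y i ω - Ylim ω) ^ 2 ∂μ) := by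
  have hid := sum_range_mul_integral_sq_coupledPartialSum hY fun i => (hqpos i).ne'
  have hsq : ∀ {f : Ω → ℝ}, 0 ≤ ∫ ω, f ω ^ 2 ∂μ := integral_nonneg fun ω => sq_nonneg _
  obtain ⟨C, hC⟩ : BddAbove (Set.range fun m => ∫ ω, Y m ω ^ 2 ∂μ) := by
    simpa using (tendsto_integral_sq_sub hY hYlim MemLp.zero hconv).bddAbove_range
  rw [memLp_two_coupledSum_iff hYmeas hY (fun i => (hqpos i).le) hqdec hNmeas hindep hN]
  constructor
  · refine summable_inv_sub_inv_mul_of_summable hqpos hqdec hqlim (fun _ => hsq)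
      (fun _ _ => hsq) (fun i => tendsto_integral_sq_sub hY hYlim (hY i) hconv) fun m => ?_
    have : 0 ≤ (∫ ω, Y m ω ^ 2 ∂μ) / q 0 := div_nonneg hsq (hqpos 0).le
    linarith [hid m]
  · refine summable_sub_mul_of_summable hqpos hqdec hqlim (C / q 0) (fun _ => hsq)
      (fun _ => hsq) (fun i m => integral_sq_sub_le (hY i) (hY m) hYlim) fun m => ?_
    have : (∫ ω, Y m ω ^ 2 ∂μ) / q 0 ≤ C / q 0 :=
      div_le_div_of_nonneg_right (hC ⟨m, rfl⟩) (hqpos 0).le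
    have : 0 ≤ q (m + 1) * ∫ ω, coupledPartialSum q m (fun k => Y k ω) ^ 2 ∂μ :=
      mul_nonneg (hqpos _).le hsq
    linarith [hid m]

theorem stmt_6 {Ω : Type*} [MeasurableSpace Ω] (μ : Measure Ω)
    [IsProbabilityMeasure μ]
    (Y : ℕ → Ω → ℝ) (Ylim : Ω → ℝ)
    (hYmeas : ∀ n, Measurable (Y n))
    (hY : ∀ n, MemLp (Y n) 2 μ) (hYlim : MemLp Ylim 2 μ)
    (hconv : Tendsto (fun n => ∫ ω, (Y n ω - Ylim ω) ^ 2 ∂μ) atTop (nhds 0))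
    (q : ℕ → ℝ) (hq0 : q 0 = 1) (hqdec : ∀ i, q (i + 1) ≤ q i)
    (hqpos : ∀ i, 0 < q i) (hqlim : Tendsto q atTop (nhds 0))
    (N : Ω → ℕ) (hNmeas : Measurable N)
    (hindep : IndepFun (fun ω i => Y i ω) N μ)
    (hN : ∀ i, μ {ω | i ≤ N ω} = ENNReal.ofReal (q i)) :
    MemLp (coupledSum Y q N) 2 μ ↔
      Summable (fun i => (1 / q (i + 1) - 1 / q i) * ∫ ω, (Y i ω - Ylim ω) ^ 2 ∂μ) :=
  stmt_6_general μ Y Ylim hYmeas hY hYlim hconv q hqdec hqpos hqlim N hNmeas hindep hN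
end

section
/- With Z̄_n = ∑_{k=0}^{n∧N} (Y_k − Y_{k−1})/q_k, for all −1 ≤ m ≤ n one has E[Z̄_n] = E[Y_n] and E[(Z̄_n − Z̄_m)²] = ∑_{i=m+1}^{n} (E[(Y_{i−1} − Y_n)²] − E[(Y_i − Y_n)²]) / q_i. -/
/-! With `I_k = 𝟙{k ≤ N}` one has `Z̄_n = ∑_{k ≤ n} I_k Δ_k / q_k`, and the independence of `N`
from `Y` gives `E[F(Y) I_k] = q_k E[F(Y)]`. Hence `E[Z̄_n] = ∑_{k ≤ n} E[Δ_k] = E[Y_n]`, and, since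
`I_j I_k = I_k` for `j ≤ k`, the summands `a_k = I_k Δ_k / q_k` satisfy
`E[a_j a_k] = E[Δ_j Δ_k] / q_j` for `j ≤ k`. Expanding `(∑_{m < k ≤ n} a_k)²` as
`∑_j a_j (a_j + 2 ∑_{k > j} a_k)` turns the second moment into
`∑_i E[Δ_i (Δ_i + 2 (Y_n - Y_i))] / q_i`, and
`Δ_i (Δ_i + 2 (Y_n - Y_i)) = (Y_{i-1} - Y_n)² - (Y_i - Y_n)²`. -/

open MeasureTheory ProbabilityTheory Filter

/-- `Y` indexed by integers, with `Y_j = 0` for `j < 0`. -/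
noncomputable def YInt {Ω : Type*} (Y : ℕ → Ω → ℝ) : ℤ → Ω → ℝ :=
  fun j ω => if j < 0 then 0 else Y j.toNat ω

/-- `Z̄_n = ∑_{k=0}^{n ∧ N} (Y_k - Y_{k-1}) / q_k`, with `Z̄_{-1} = 0`. -/
noncomputable def coupledSumTrunc {Ω : Type*} (Y : ℕ → Ω → ℝ) (q : ℕ → ℝ)
    (N : Ω → ℕ) : ℤ → Ω → ℝ :=
  fun j ω => if j < 0 then 0
    else ∑ k ∈ Finset.range (min j.toNat (N ω) + 1), diffSeq Y k ω / q k

open Finset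

lemma sq_sum_Ico_eq_sum_mul_add_two_mul_sum {R : Type*} [CommRing R] (a : ℕ → R) (M T : ℕ) :
    (∑ k ∈ Ico M T, a k) ^ 2 = ∑ j ∈ Ico M T, a j * (a j + 2 * ∑ k ∈ Ico (j + 1) T, a k) := by
  induction T with
  | zero => simp
  | succ T ih =>
    rcases lt_or_ge T M with hTM | hMT
    · simp [Ico_eq_empty_of_le (show M ≥ T + 1 by omega)]
    · have hinner : ∑ j ∈ Ico M T, a j * (a j + 2 * ∑ k ∈ Ico (j + 1) (T + 1), a k) =
          ∑ j ∈ Ico M T, a j * (a j + 2 * ∑ k ∈ Ico (j + 1) T, a k) +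
            2 * (∑ j ∈ Ico M T, a j) * a T := by
        rw [mul_sum, sum_mul, ← sum_add_distrib]
        refine sum_congr rfl fun j hj => ?_
        rw [sum_Ico_succ_top (by simp at hj; omega)]
        ring
      rw [sum_Ico_succ_top hMT, sum_Ico_succ_top hMT, hinner, ← ih, Ico_self, sum_empty]
      ring

lemma sum_Icc_int_eq_sum_Ico_toNat {M : Type*} [AddCommMonoid M] (f : ℤ → M) {a : ℤ}
    (ha : 0 ≤ a) (b : ℤ) : ∑ i ∈ Icc a b, f i = ∑ i ∈ Ico a.toNat (b + 1).toNat, f i := by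
  refine sum_nbij' Int.toNat (↑) ?_ ?_ ?_ ?_ ?_ <;> intro i hi <;>
    simp only [mem_Icc, mem_Ico] at hi ⊢ <;> first | omega | rw [Int.toNat_of_nonneg (by omega)]

section Independence

variable {Ω β : Type*} [MeasurableSpace Ω] [MeasurableSpace β] {μ : Measure Ω}

lemma integral_indicator_preimage_of_indepFun {F : Ω → ℝ} {N : Ω → β} (hFN : IndepFun F N μ)
    (hF : AEStronglyMeasurable F μ) (hN : Measurable N) {s : Set β} (hs : MeasurableSet s) :
    ∫ ω, (N ⁻¹' s).indicator F ω ∂μ = (∫ ω, F ω ∂μ) * μ.real (N ⁻¹' s) := by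
  have hindicator : (N ⁻¹' s).indicator F = F * (s.indicator 1 ∘ N) := by
    ext ω
    by_cases hω : N ω ∈ s <;> simp [hω]
  rw [hindicator, ← integral_indicator_one (hN hs)]
  exact (hFN.comp measurable_id (measurable_one.indicator hs)).integral_mul_eq_mul_integral
    hF ((measurable_one.indicator hs).comp hN).aestronglyMeasurable

end Independence

section Increments

variable {Ω : Type*} (Y : ℕ → Ω → ℝ)

lemma diffSeq_zero : diffSeq Y 0 = Y 0 :=
  funext fun _ => by simp [diffSeq]

lemma diffSeq_succ (k : ℕ) : diffSeq Y (k + 1) = Y (k + 1) - Y k :=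
  funext fun _ => by simp [diffSeq]

lemma sum_range_diffSeq (n : ℕ) (ω : Ω) : ∑ k ∈ range (n + 1), diffSeq Y k ω = Y n ω := by
  induction n with
  | zero => simp [diffSeq]
  | succ n ih => rw [sum_range_succ, ih]; simp [diffSeq]

lemma sum_Ico_diffSeq {i n : ℕ} (h : i ≤ n) (ω : Ω) :
    ∑ k ∈ Ico (i + 1) (n + 1), diffSeq Y k ω = Y n ω - Y i ω := by
  rw [sum_Ico_eq_sub _ (by omega), sum_range_diffSeq, sum_range_diffSeq]

lemma sum_range_toNat_diffSeq {n : ℤ} (hn : -1 ≤ n) (ω : Ω) :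
    ∑ k ∈ range (n + 1).toNat, diffSeq Y k ω = YInt Y n ω := by
  rcases hn.eq_or_lt with rfl | hn
  · simp [YInt]
  · rw [show (n + 1).toNat = n.toNat + 1 by omega, sum_range_diffSeq, YInt, if_neg (by omega)]

lemma YInt_of_nonneg {n : ℤ} (hn : 0 ≤ n) : YInt Y n = Y n.toNat :=
  funext fun _ => if_neg (by omega)

lemma YInt_natCast_sub_one (i : ℕ) : YInt Y (i - 1) = Y i - diffSeq Y i := by
  funext ω
  rcases i with _ | i <;> simp [YInt, diffSeq]

variable {Y}

lemma memLp_diffSeq [MeasurableSpace Ω] {μ : Measure Ω} (hY : ∀ n, MemLp (Y n) 2 μ) (k : ℕ) :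
    MemLp (diffSeq Y k) 2 μ := by
  rcases k with _ | k
  · exact diffSeq_zero Y ▸ hY 0
  · exact diffSeq_succ Y k ▸ (hY (k + 1)).sub (hY k)

lemma measurable_diffSeq [MeasurableSpace Ω] (hY : ∀ n, Measurable (Y n)) (k : ℕ) :
    Measurable (diffSeq Y k) := by
  rcases k with _ | k
  · exact diffSeq_zero Y ▸ hY 0
  · exact diffSeq_succ Y k ▸ (hY (k + 1)).sub (hY k)

end Increments

section WeightedIncrement

variable {Ω : Type*} {Y : ℕ → Ω → ℝ} {q : ℕ → ℝ} {N : Ω → ℕ}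

noncomputable def weightedIncrement (Y : ℕ → Ω → ℝ) (q : ℕ → ℝ) (N : Ω → ℕ) (k : ℕ) : Ω → ℝ :=
  (N ⁻¹' Set.Ici k).indicator fun ω => diffSeq Y k ω / q k

lemma coupledSumTrunc_eq_sum_weightedIncrement {j : ℤ} (hj : -1 ≤ j) (ω : Ω) :
    coupledSumTrunc Y q N j ω = ∑ k ∈ range (j + 1).toNat, weightedIncrement Y q N k ω := by
  classical
  rcases hj.eq_or_lt with rfl | hj
  · simp [coupledSumTrunc]
  have hfilter : {k ∈ range (j + 1).toNat | k ≤ N ω} = range (min j.toNat (N ω) + 1) := by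
    ext k
    simp only [mem_filter, mem_range]
    omega
  simp only [weightedIncrement, Set.indicator_apply, Set.mem_preimage, Set.mem_Ici]
  rw [← sum_filter, hfilter, coupledSumTrunc, if_neg (by omega)]

variable [MeasurableSpace Ω] {μ : Measure Ω}

lemma memLp_weightedIncrement (hY : ∀ n, MemLp (Y n) 2 μ) (hNmeas : Measurable N) (k : ℕ) :
    MemLp (weightedIncrement Y q N k) 2 μ := by
  simpa only [weightedIncrement, div_eq_mul_inv] using
    ((memLp_diffSeq hY k).mul_const (q k)⁻¹).indicator (hNmeas measurableSet_Ici)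

lemma integral_weightedIncrement [IsFiniteMeasure μ] (hY : ∀ n, MemLp (Y n) 2 μ)
    (hNmeas : Measurable N) (hindep : IndepFun (fun ω i => Y i ω) N μ)
    (hNq : ∀ k, μ.real (N ⁻¹' Set.Ici k) = q k) (hq : ∀ k, q k ≠ 0) (k : ℕ) :
    ∫ ω, weightedIncrement Y q N k ω ∂μ = ∫ ω, diffSeq Y k ω ∂μ := by
  -- `diffSeq Y k` is, definitionally, `diffSeq` of the coordinate process applied to the path of `Y`
  have hcoord := measurable_diffSeq (Y := fun i (y : ℕ → ℝ) => y i) (fun i => measurable_pi_apply i)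
  have hindep_k : IndepFun (fun ω => diffSeq Y k ω / q k) N μ :=
    hindep.comp ((hcoord k).div_const (q k)) measurable_id
  rw [weightedIncrement, integral_indicator_preimage_of_indepFun hindep_k
    (((memLp_diffSeq hY k).integrable one_le_two).div_const (q k)).aestronglyMeasurable
    hNmeas measurableSet_Ici, hNq, integral_div, div_mul_cancel₀ _ (hq k)]

lemma integral_weightedIncrement_mul (hY : ∀ n, MemLp (Y n) 2 μ) (hNmeas : Measurable N)
    (hindep : IndepFun (fun ω i => Y i ω) N μ) (hNq : ∀ k, μ.real (N ⁻¹' Set.Ici k) = q k)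
    (hq : ∀ k, q k ≠ 0) {j k : ℕ} (hjk : j ≤ k) :
    ∫ ω, weightedIncrement Y q N j ω * weightedIncrement Y q N k ω ∂μ
      = (∫ ω, diffSeq Y j ω * diffSeq Y k ω ∂μ) / q j := by
  have hprod : (fun ω => weightedIncrement Y q N j ω * weightedIncrement Y q N k ω) =
      (N ⁻¹' Set.Ici k).indicator fun ω => diffSeq Y j ω * diffSeq Y k ω / (q j * q k) := by
    ext ω
    by_cases hk : k ≤ N ω
    · simp [weightedIncrement, hk, hjk.trans hk, div_mul_div_comm]
    · simp [weightedIncrement, hk]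
  have hcoord := measurable_diffSeq (Y := fun i (y : ℕ → ℝ) => y i) (fun i => measurable_pi_apply i)
  have hindep_jk : IndepFun (fun ω => diffSeq Y j ω * diffSeq Y k ω / (q j * q k)) N μ :=
    hindep.comp (((hcoord j).mul (hcoord k)).div_const _) measurable_id
  rw [hprod, integral_indicator_preimage_of_indepFun hindep_jk
    (((memLp_diffSeq hY j).integrable_mul (memLp_diffSeq hY k)).div_const _).aestronglyMeasurable
    hNmeas measurableSet_Ici, hNq, integral_div]
  field_simp [hq j, hq k]

lemma integral_mul_add_two_mul_sum {f : ℕ → Ω → ℝ} (hf : ∀ k, MemLp (f k) 2 μ) (j : ℕ)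
    (s : Finset ℕ) :
    ∫ ω, f j ω * (f j ω + 2 * ∑ k ∈ s, f k ω) ∂μ
      = ∫ ω, f j ω * f j ω ∂μ + 2 * ∑ k ∈ s, ∫ ω, f j ω * f k ω ∂μ := by
  have hint : ∀ k, Integrable (fun ω => f j ω * f k ω) μ := fun k => (hf j).integrable_mul (hf k)
  simp only [mul_add, mul_sum, mul_left_comm (f j _) 2]
  rw [integral_add (hint j) (integrable_finsetSum _ fun k _ => (hint k).const_mul 2),
    integral_finsetSum _ fun k _ => (hint k).const_mul 2]
  simp only [integral_const_mul]

lemma integral_sq_sum_weightedIncrement (hY : ∀ n, MemLp (Y n) 2 μ) (hNmeas : Measurable N)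
    (hindep : IndepFun (fun ω i => Y i ω) N μ) (hNq : ∀ k, μ.real (N ⁻¹' Set.Ici k) = q k)
    (hq : ∀ k, q k ≠ 0) (M T : ℕ) :
    ∫ ω, (∑ k ∈ Ico M T, weightedIncrement Y q N k ω) ^ 2 ∂μ
      = ∑ j ∈ Ico M T, (∫ ω, diffSeq Y j ω *
          (diffSeq Y j ω + 2 * ∑ k ∈ Ico (j + 1) T, diffSeq Y k ω) ∂μ) / q j := by
  have hW := memLp_weightedIncrement (q := q) hY hNmeas
  have hint : ∀ j, Integrable (fun ω => weightedIncrement Y q N j ω *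
      (weightedIncrement Y q N j ω + 2 * ∑ k ∈ Ico (j + 1) T, weightedIncrement Y q N k ω)) μ :=
    fun j => (hW j).integrable_mul ((hW j).add ((memLp_finsetSum _ fun k _ => hW k).const_mul 2))
  simp_rw [sq_sum_Ico_eq_sum_mul_add_two_mul_sum]
  rw [integral_finsetSum _ fun j _ => hint j]
  refine sum_congr rfl fun j _ => ?_
  rw [integral_mul_add_two_mul_sum hW, integral_mul_add_two_mul_sum (memLp_diffSeq hY),
    integral_weightedIncrement_mul hY hNmeas hindep hNq hq le_rfl,
    sum_congr rfl fun k hk => integral_weightedIncrement_mul hY hNmeas hindep hNq hq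
      (by simp at hk; omega), ← sum_div]
  ring

end WeightedIncrement

lemma integral_sq_sub_YInt_sub_integral_sq_sub_YInt {Ω : Type*} [MeasurableSpace Ω]
    {μ : Measure Ω} {Y : ℕ → Ω → ℝ} (hY : ∀ n, MemLp (Y n) 2 μ) {i : ℕ} {n : ℤ} (hin : i ≤ n) :
    (∫ ω, (YInt Y (i - 1) ω - YInt Y n ω) ^ 2 ∂μ) - ∫ ω, (YInt Y i ω - YInt Y n ω) ^ 2 ∂μ
      = ∫ ω, diffSeq Y i ω *
          (diffSeq Y i ω + 2 * ∑ k ∈ Ico (i + 1) (n + 1).toNat, diffSeq Y k ω) ∂μ := by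
  obtain ⟨n, rfl⟩ : ∃ n' : ℕ, n = n' := ⟨n.toNat, by omega⟩
  have hYi : Integrable (fun ω => (Y i ω - Y n ω) ^ 2) μ := ((hY i).sub (hY n)).integrable_sq
  have hYi' : Integrable (fun ω => (Y i ω - diffSeq Y i ω - Y n ω) ^ 2) μ :=
    (((hY i).sub (memLp_diffSeq hY i)).sub (hY n)).integrable_sq
  rw [YInt_natCast_sub_one, YInt_of_nonneg Y (Nat.cast_nonneg i),
    YInt_of_nonneg Y (Nat.cast_nonneg n)]
  simp only [Int.toNat_natCast, Pi.sub_apply, show ((n : ℤ) + 1).toNat = n + 1 by omega,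
    sum_Ico_diffSeq Y (show i ≤ n by omega)]
  rw [← integral_sub hYi' hYi]
  congr 1
  ext ω
  ring

theorem stmt_8_general {Ω : Type*} [MeasurableSpace Ω] (μ : Measure Ω)
    [IsProbabilityMeasure μ]
    (Y : ℕ → Ω → ℝ)
    (hY : ∀ n, MemLp (Y n) 2 μ)
    (q : ℕ → ℝ)
    (hqpos : ∀ i, 0 < q i)
    (N : Ω → ℕ) (hNmeas : Measurable N)
    (hindep : IndepFun (fun ω i => Y i ω) N μ)
    (hN : ∀ i, μ {ω | i ≤ N ω} = ENNReal.ofReal (q i))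
    (m n : ℤ) (hm : -1 ≤ m) (hmn : m ≤ n) :
    (∫ ω, coupledSumTrunc Y q N n ω ∂μ = ∫ ω, YInt Y n ω ∂μ) ∧
      ∫ ω, (coupledSumTrunc Y q N n ω - coupledSumTrunc Y q N m ω) ^ 2 ∂μ =
        ∑ i ∈ Finset.Icc (m + 1) n,
          ((∫ ω, (YInt Y (i - 1) ω - YInt Y n ω) ^ 2 ∂μ) -
              ∫ ω, (YInt Y i ω - YInt Y n ω) ^ 2 ∂μ) / q i.toNat := by
  have hq : ∀ k, q k ≠ 0 := fun k => (hqpos k).ne'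
  have hNq : ∀ k, μ.real (N ⁻¹' Set.Ici k) = q k := fun k => by
    rw [measureReal_def, show N ⁻¹' Set.Ici k = {ω | k ≤ N ω} from rfl, hN,
      ENNReal.toReal_ofReal (hqpos k).le]
  have hn : -1 ≤ n := hm.trans hmn
  constructor
  · simp_rw [coupledSumTrunc_eq_sum_weightedIncrement hn, ← sum_range_toNat_diffSeq Y hn]
    rw [integral_finsetSum _ fun k _ => (memLp_weightedIncrement hY hNmeas k).integrable one_le_two,
      integral_finsetSum _ fun k _ => (memLp_diffSeq hY k).integrable one_le_two]
    exact sum_congr rfl fun k _ => integral_weightedIncrement hY hNmeas hindep hNq hq k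
  · have hdiff : ∀ ω, coupledSumTrunc Y q N n ω - coupledSumTrunc Y q N m ω
        = ∑ k ∈ Ico (m + 1).toNat (n + 1).toNat, weightedIncrement Y q N k ω := fun ω => by
      rw [coupledSumTrunc_eq_sum_weightedIncrement hn, coupledSumTrunc_eq_sum_weightedIncrement hm,
        sum_Ico_eq_sub _ (by omega)]
    simp_rw [hdiff]
    rw [integral_sq_sum_weightedIncrement hY hNmeas hindep hNq hq,
      sum_Icc_int_eq_sum_Ico_toNat _ (by omega : 0 ≤ m + 1)]
    refine sum_congr rfl fun i hi => ?_
    rw [Int.toNat_natCast, integral_sq_sub_YInt_sub_integral_sq_sub_YInt hY (by simp at hi; omega)]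

theorem stmt_8 {Ω : Type*} [MeasurableSpace Ω] (μ : Measure Ω)
    [IsProbabilityMeasure μ]
    (Y : ℕ → Ω → ℝ) (hYmeas : ∀ n, Measurable (Y n))
    (hY : ∀ n, MemLp (Y n) 2 μ)
    (q : ℕ → ℝ) (hq0 : q 0 = 1) (hqdec : ∀ i, q (i + 1) ≤ q i)
    (hqpos : ∀ i, 0 < q i) (hqlim : Tendsto q atTop (nhds 0))
    (N : Ω → ℕ) (hNmeas : Measurable N)
    (hindep : IndepFun (fun ω i => Y i ω) N μ)
    (hN : ∀ i, μ {ω | i ≤ N ω} = ENNReal.ofReal (q i))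
    (m n : ℤ) (hm : -1 ≤ m) (hmn : m ≤ n) :
    (∫ ω, coupledSumTrunc Y q N n ω ∂μ = ∫ ω, YInt Y n ω ∂μ) ∧
      ∫ ω, (coupledSumTrunc Y q N n ω - coupledSumTrunc Y q N m ω) ^ 2 ∂μ =
        ∑ i ∈ Finset.Icc (m + 1) n,
          ((∫ ω, (YInt Y (i - 1) ω - YInt Y n ω) ^ 2 ∂μ) -
              ∫ ω, (YInt Y i ω - YInt Y n ω) ^ 2 ∂μ) / q i.toNat :=
  stmt_8_general μ Y hY q hqpos N hNmeas hindep hN m n hm hmn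
end

section
/- With Z̃_n = ∑_{k=0}^{n∧N} Δ̃_k/q_k, for −1 ≤ m ≤ n one has E[(Z̃_n − Z̃_m)²] = (E[Y_m − Y_n])²/q_{m+1} + ∑_{i=m+1}^{n} ( Var(Δ_i)/q_i + (E[Y_i − Y_n])² (1/q_{i+1} − 1/q_i) ), where Δ_i = Y_i − Y_{i−1}. -/
/-! `Z̃_n - Z̃_m = ∑_{m < k ≤ n} 1_{k ≤ N} Δ̃_k / q_k`. Since `N` is independent of `(Δ̃_k)`, the
product of the `i`-th and `j`-th summands has mean `E[Δ̃_i Δ̃_j] / q_{min(i,j)}`, and independence of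
the `Δ̃_k` gives `E[Δ̃_i Δ̃_j] = d_i d_j + [i = j] Var(Δ_i)` with `d_i = E Δ_i`. Summing the mean part
`∑_{i,j} d_i d_j / q_{min(i,j)}` by parts against the tails `T_i = ∑_{j ≥ i} d_j = E(Y_n - Y_{i-1})`
yields `T_{m+1}² / q_{m+1} + ∑_i T_{i+1}² (1 / q_{i+1} - 1 / q_i)`. -/

open MeasureTheory ProbabilityTheory Filter

/-- `Z̃_n = ∑_{k=0}^{n ∧ N} Δ̃_k / q_k`, with `Z̃_{-1} = 0`. -/
noncomputable def indepSumTrunc {Ω : Type*} (Δ : ℕ → Ω → ℝ) (q : ℕ → ℝ)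
    (N : Ω → ℕ) : ℤ → Ω → ℝ :=
  fun j ω => if j < 0 then 0
    else ∑ k ∈ Finset.range (min j.toNat (N ω) + 1), Δ k ω / q k

open Finset
open scoped ENNReal

lemma sum_Ico_sum_Ico_mul_div_min (d q : ℕ → ℝ) {M K : ℕ} (hMK : M ≤ K) :
    ∑ i ∈ Ico M K, ∑ j ∈ Ico M K, d i * d j / q (min i j) =
      (∑ j ∈ Ico M K, d j) ^ 2 / q M +
        ∑ i ∈ Ico M K, (∑ j ∈ Ico (i + 1) K, d j) ^ 2 * (1 / q (i + 1) - 1 / q i) := by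
  induction hMK using Nat.decreasingInduction with
  | self => simp
  | of_succ M hM ih =>
    have hmin : ∀ j ∈ Ico (M + 1) K, min M j = M ∧ min j M = M := fun j hj => by
      simp only [mem_Ico] at hj; omega
    simp only [sum_eq_sum_Ico_succ_bot hM, min_self]
    set T := ∑ j ∈ Ico (M + 1) K, d j
    have hrow : ∑ j ∈ Ico (M + 1) K, d M * d j / q (min M j) = d M * T / q M := by
      rw [mul_sum, sum_div]
      exact sum_congr rfl fun j hj => by rw [(hmin j hj).1]
    have hcol : ∑ i ∈ Ico (M + 1) K, d i * d M / q (min i M) = d M * T / q M := by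
      rw [mul_sum, sum_div]
      exact sum_congr rfl fun i hi => by rw [(hmin i hi).2, mul_comm]
    rw [sum_add_distrib, hrow, hcol, ih]
    ring

lemma sum_Icc_intCast_eq_sum_Ico {β : Type*} [AddCommMonoid β] (f : ℤ → β) (M K : ℕ) :
    ∑ i ∈ Icc (M : ℤ) (K - 1), f i = ∑ i ∈ Ico M K, f i := by
  have hmap : Icc (M : ℤ) (K - 1) = (Ico M K).map Nat.castEmbedding := by
    ext i
    simp only [mem_Icc, Finset.mem_map, mem_Ico, Nat.castEmbedding_apply]
    constructor
    · rintro ⟨h1, h2⟩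
      exact ⟨i.toNat, by omega, by omega⟩
    · rintro ⟨k, ⟨h1, h2⟩, rfl⟩
      omega
  rw [hmap, sum_map]
  rfl

section Increments

variable {Ω : Type*}

lemma YInt_natCast (Y : ℕ → Ω → ℝ) (k : ℕ) (ω : Ω) : YInt Y k ω = Y k ω := by
  simp [YInt]

lemma diffSeq_eq_YInt_sub (Y : ℕ → Ω → ℝ) (k : ℕ) (ω : Ω) :
    diffSeq Y k ω = YInt Y k ω - YInt Y (k - 1) ω := by
  rcases k with _ | k
  · simp [diffSeq, YInt]
  · rw [show ((k + 1 : ℕ) : ℤ) - 1 = k by push_cast; ring, YInt_natCast, YInt_natCast]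
    simp [diffSeq]

lemma sum_Ico_diffSeq_s13 (Y : ℕ → Ω → ℝ) {a b : ℕ} (hab : a ≤ b) (ω : Ω) :
    ∑ j ∈ Ico a b, diffSeq Y j ω = YInt Y (b - 1) ω - YInt Y (a - 1) ω := by
  simp_rw [diffSeq_eq_YInt_sub]
  simpa using sum_Ico_sub (fun j : ℕ => YInt Y ((j : ℤ) - 1) ω) hab

noncomputable def truncTerm (Δ : ℕ → Ω → ℝ) (q : ℕ → ℝ) (N : Ω → ℕ) (k : ℕ) : Ω → ℝ :=
  {ω | k ≤ N ω}.indicator fun ω => Δ k ω / q k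

lemma indepSumTrunc_eq_sum_range (Δ : ℕ → Ω → ℝ) (q : ℕ → ℝ) (N : Ω → ℕ) (j : ℤ) (ω : Ω) :
    indepSumTrunc Δ q N j ω = ∑ k ∈ range (j + 1).toNat, truncTerm Δ q N k ω := by
  unfold indepSumTrunc truncTerm
  split_ifs with hj
  · rw [show (j + 1).toNat = 0 by omega, sum_range_zero]
  · have hfilter : range (min j.toNat (N ω) + 1) = {k ∈ range (j + 1).toNat | k ≤ N ω} := by
      ext k
      simp only [mem_range, mem_filter]
      omega
    rw [hfilter, sum_filter]
    simp [Set.indicator_apply]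

end Increments

section Moments

variable {Ω : Type*} [MeasurableSpace Ω] {μ : Measure Ω}

lemma integral_sq_sum {ι : Type*} (s : Finset ι) {X : ι → Ω → ℝ}
    (hX : ∀ i ∈ s, MemLp (X i) 2 μ) :
    ∫ ω, (∑ i ∈ s, X i ω) ^ 2 ∂μ = ∑ i ∈ s, ∑ j ∈ s, ∫ ω, X i ω * X j ω ∂μ := by
  have hint : ∀ i ∈ s, ∀ j ∈ s, Integrable (fun ω => X i ω * X j ω) μ :=
    fun i hi j hj => (hX i hi).integrable_mul (hX j hj)
  simp_rw [sq, sum_mul_sum]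
  rw [integral_finsetSum _ fun i hi => integrable_finsetSum _ (hint i hi)]
  exact sum_congr rfl fun i hi => integral_finsetSum _ (hint i hi)

lemma integral_mul_eq_variance_add_of_iIndepFun [IsProbabilityMeasure μ] {Δ : ℕ → Ω → ℝ}
    (hΔ : ∀ i, MemLp (Δ i) 2 μ) (hindep : iIndepFun Δ μ) (i j : ℕ) :
    ∫ ω, Δ i ω * Δ j ω ∂μ = (if i = j then variance (Δ i) μ else 0) + μ[Δ i] * μ[Δ j] := by
  have hcov := covariance_eq_sub (hΔ i) (hΔ j)
  simp only [Pi.mul_apply] at hcov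
  split_ifs with hij
  · subst hij
    rw [covariance_self (hΔ i).aemeasurable] at hcov
    linarith
  · rw [(hindep.indepFun hij).covariance_eq_zero (hΔ i) (hΔ j)] at hcov
    linarith

lemma integral_YInt_sub_YInt {Y : ℕ → Ω → ℝ} (hY : ∀ j, Integrable (diffSeq Y j) μ) {a b : ℕ}
    (hab : a ≤ b) :
    ∫ ω, (YInt Y (b - 1) ω - YInt Y (a - 1) ω) ∂μ = ∑ j ∈ Ico a b, ∫ ω, diffSeq Y j ω ∂μ := by
  simp_rw [← sum_Ico_diffSeq_s13 Y hab]
  exact integral_finsetSum _ fun j _ => hY j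

variable {Δ : ℕ → Ω → ℝ} {q : ℕ → ℝ} {N : Ω → ℕ}

lemma memLp_truncTerm (hNmeas : Measurable N) {k : ℕ} {p : ℝ≥0∞} (hΔ : MemLp (Δ k) p μ) :
    MemLp (truncTerm Δ q N k) p μ := by
  simp_rw [truncTerm, div_eq_mul_inv]
  exact (hΔ.mul_const _).indicator (hNmeas measurableSet_Ici)

lemma integral_truncTerm_mul_truncTerm [IsProbabilityMeasure μ] (hNmeas : Measurable N)
    (hindep : IndepFun (fun ω i => Δ i ω) N μ)
    (hN : ∀ i, μ {ω | i ≤ N ω} = ENNReal.ofReal (q i)) (hq : ∀ i, 0 < q i)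
    {i j : ℕ} (hΔi : AEStronglyMeasurable (Δ i) μ) (hΔj : AEStronglyMeasurable (Δ j) μ) :
    ∫ ω, truncTerm Δ q N i ω * truncTerm Δ q N j ω ∂μ
      = (∫ ω, Δ i ω * Δ j ω ∂μ) / q (min i j) := by
  set A : Set ℕ := Set.Ici (max i j)
  have hprod : (fun ω => truncTerm Δ q N i ω * truncTerm Δ q N j ω)
      = fun ω => (Δ i ω * Δ j ω) * (A.indicator 1 ∘ N) ω / (q i * q j) := by
    ext ω
    simp only [truncTerm, Set.indicator_apply, Function.comp_apply, A, Set.mem_Ici,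
      Set.mem_ofPred_eq, sup_le_iff, Pi.one_apply]
    split_ifs <;> first | ring1 | (exfalso; omega)
  have hindepA : IndepFun (fun ω => Δ i ω * Δ j ω) (A.indicator 1 ∘ N) μ :=
    hindep.comp ((measurable_pi_apply i).mul (measurable_pi_apply j))
      (measurable_from_top (f := A.indicator (1 : ℕ → ℝ)))
  have hfactor := hindepA.integral_mul_eq_mul_integral (hΔi.mul hΔj)
    (measurable_from_top.comp hNmeas).aestronglyMeasurable
  simp only [Pi.mul_apply] at hfactor
  have hqA : ∫ ω, (A.indicator 1 ∘ N) ω ∂μ = q (max i j) := by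
    change ∫ ω, (N ⁻¹' A).indicator (1 : Ω → ℝ) ω ∂μ = _
    rw [integral_indicator_one (hNmeas measurableSet_Ici), measureReal_def]
    exact (congrArg ENNReal.toReal (hN _)).trans (ENNReal.toReal_ofReal (hq _).le)
  have hq_min_max : q i * q j = q (min i j) * q (max i j) := by
    rcases le_total i j with h | h
    · rw [min_eq_left h, max_eq_right h]
    · rw [min_eq_right h, max_eq_left h, mul_comm]
  rw [hprod, integral_div, hfactor, hqA, hq_min_max, mul_div_mul_right _ _ (hq _).ne']

theorem integral_sq_sum_Ico_truncTerm [IsProbabilityMeasure μ] (hΔ : ∀ i, MemLp (Δ i) 2 μ)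
    (hΔindep : iIndepFun Δ μ) (hNmeas : Measurable N)
    (hindep : IndepFun (fun ω i => Δ i ω) N μ)
    (hN : ∀ i, μ {ω | i ≤ N ω} = ENNReal.ofReal (q i)) (hq : ∀ i, 0 < q i)
    {M K : ℕ} (hMK : M ≤ K) :
    ∫ ω, (∑ k ∈ Ico M K, truncTerm Δ q N k ω) ^ 2 ∂μ =
      (∑ j ∈ Ico M K, μ[Δ j]) ^ 2 / q M +
        ∑ i ∈ Ico M K, (variance (Δ i) μ / q i +
          (∑ j ∈ Ico (i + 1) K, μ[Δ j]) ^ 2 * (1 / q (i + 1) - 1 / q i)) := by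
  rw [integral_sq_sum _ fun k _ => memLp_truncTerm hNmeas (hΔ k)]
  simp_rw [integral_truncTerm_mul_truncTerm hNmeas hindep hN hq (hΔ _).aestronglyMeasurable
      (hΔ _).aestronglyMeasurable, integral_mul_eq_variance_add_of_iIndepFun hΔ hΔindep, add_div,
    sum_add_distrib]
  have hdiag : ∑ i ∈ Ico M K, ∑ j ∈ Ico M K, (if i = j then variance (Δ i) μ else 0) / q (min i j)
      = ∑ i ∈ Ico M K, variance (Δ i) μ / q i :=
    sum_congr rfl fun i hi => by simp [ite_div, hi]
  rw [hdiag, sum_Ico_sum_Ico_mul_div_min _ _ hMK]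
  ring

end Moments

theorem stmt_13_general {Ω : Type*} [MeasurableSpace Ω] (μ : Measure Ω)
    [IsProbabilityMeasure μ]
    (Y : ℕ → Ω → ℝ)
    (Δ : ℕ → Ω → ℝ)
    (hΔL2 : ∀ n, MemLp (Δ n) 2 μ)
    (hΔindep : iIndepFun Δ μ)
    (hΔdist : ∀ n, IdentDistrib (Δ n) (diffSeq Y n) μ μ)
    (q : ℕ → ℝ)
    (hqpos : ∀ i, 0 < q i)
    (N : Ω → ℕ) (hNmeas : Measurable N)
    (hindep : IndepFun (fun ω i => Δ i ω) N μ)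
    (hN : ∀ i, μ {ω | i ≤ N ω} = ENNReal.ofReal (q i))
    (m n : ℤ) (hm : -1 ≤ m) (hmn : m ≤ n) :
    ∫ ω, (indepSumTrunc Δ q N n ω - indepSumTrunc Δ q N m ω) ^ 2 ∂μ =
      (∫ ω, (YInt Y m ω - YInt Y n ω) ∂μ) ^ 2 / q (m + 1).toNat +
        ∑ i ∈ Finset.Icc (m + 1) n,
          (variance (diffSeq Y i.toNat) μ / q i.toNat +
            (∫ ω, (YInt Y i ω - YInt Y n ω) ∂μ) ^ 2 *
              (1 / q (i.toNat + 1) - 1 / q i.toNat)) := by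
  obtain ⟨M, rfl⟩ : ∃ M : ℕ, m = M - 1 := ⟨(m + 1).toNat, by omega⟩
  obtain ⟨K, rfl⟩ : ∃ K : ℕ, n = K - 1 := ⟨(n + 1).toNat, by omega⟩
  have hMK : M ≤ K := by omega
  have hdiffSeq (j : ℕ) : Integrable (diffSeq Y j) μ :=
    (hΔdist j).integrable_iff.1 ((hΔL2 j).integrable one_le_two)
  have hmean (a : ℕ) (ha : a ≤ K) :
      (∫ ω, (YInt Y (a - 1) ω - YInt Y (K - 1) ω) ∂μ) ^ 2 = (∑ j ∈ Ico a K, μ[Δ j]) ^ 2 := by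
    have hneg : (fun ω => YInt Y (a - 1) ω - YInt Y (K - 1) ω)
        = fun ω => -(YInt Y (K - 1) ω - YInt Y (a - 1) ω) := funext fun ω => (neg_sub _ _).symm
    rw [hneg, integral_neg, neg_sq, integral_YInt_sub_YInt hdiffSeq ha]
    simp_rw [(hΔdist _).integral_eq]
  have hsum (ω : Ω) : indepSumTrunc Δ q N (K - 1) ω - indepSumTrunc Δ q N (M - 1) ω
      = ∑ k ∈ Ico M K, truncTerm Δ q N k ω := by
    simp only [indepSumTrunc_eq_sum_range, sub_add_cancel, Int.toNat_natCast]
    exact (sum_Ico_eq_sub _ hMK).symm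
  simp_rw [hsum]
  rw [integral_sq_sum_Ico_truncTerm hΔL2 hΔindep hNmeas hindep hN hqpos hMK, sub_add_cancel,
    Int.toNat_natCast, hmean M hMK, sum_Icc_intCast_eq_sum_Ico]
  refine congrArg _ (sum_congr rfl fun i hi => ?_)
  rw [Int.toNat_natCast, (hΔdist i).variance_eq, ← hmean (i + 1) (mem_Ico.1 hi).2]
  simp

theorem stmt_13 {Ω : Type*} [MeasurableSpace Ω] (μ : Measure Ω)
    [IsProbabilityMeasure μ]
    (Y : ℕ → Ω → ℝ) (hYmeas : ∀ n, Measurable (Y n))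
    (hY : ∀ n, MemLp (Y n) 2 μ)
    (Δ : ℕ → Ω → ℝ) (hΔmeas : ∀ n, Measurable (Δ n))
    (hΔL2 : ∀ n, MemLp (Δ n) 2 μ)
    (hΔindep : iIndepFun Δ μ)
    (hΔdist : ∀ n, IdentDistrib (Δ n) (diffSeq Y n) μ μ)
    (q : ℕ → ℝ) (hq0 : q 0 = 1) (hqdec : ∀ i, q (i + 1) ≤ q i)
    (hqpos : ∀ i, 0 < q i) (hqlim : Tendsto q atTop (nhds 0))
    (N : Ω → ℕ) (hNmeas : Measurable N)
    (hindep : IndepFun (fun ω i => Δ i ω) N μ)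
    (hN : ∀ i, μ {ω | i ≤ N ω} = ENNReal.ofReal (q i))
    (m n : ℤ) (hm : -1 ≤ m) (hmn : m ≤ n) :
    ∫ ω, (indepSumTrunc Δ q N n ω - indepSumTrunc Δ q N m ω) ^ 2 ∂μ =
      (∫ ω, (YInt Y m ω - YInt Y n ω) ∂μ) ^ 2 / q (m + 1).toNat +
        ∑ i ∈ Finset.Icc (m + 1) n,
          (variance (diffSeq Y i.toNat) μ / q i.toNat +
            (∫ ω, (YInt Y i ω - YInt Y n ω) ∂μ) ^ 2 *
              (1 / q (i.toNat + 1) - 1 / q i.toNat)) :=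
  stmt_13_general μ Y Δ hΔL2 hΔindep hΔdist q hqpos N hNmeas hindep hN m n hm hmn
end

section
/- Let ϑ with ϑ_0 = 0 be strictly increasing and tend to infinity, and let γ be positive tending to 0. Suppose there exists q ∈ A with R(q; ϑ, γ) < ∞. Let γ' be the lower hull of γ relative to ϑ, with slopes θ_i = (γ'_{i+1} − γ'_i)/(ϑ_{i+1} − ϑ_i), and set q*_i = √(θ_i/θ_0). Then q* ∈ A, q* minimizes R(·; ϑ, γ) over A, and R(q*; ϑ, γ) = ( ∑_{i=0}^∞ √((γ'_i − γ'_{i+1})(ϑ_{i+1} − ϑ_i)) )², the series being convergent. -/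
open Filter
open scoped ENNReal

/-- The set `A` of probability weight sequences. -/
def memA (q : ℕ → ℝ) : Prop :=
  q 0 = 1 ∧ (∀ i, q (i + 1) ≤ q i) ∧ (∀ i, 0 < q i) ∧ Tendsto q atTop (nhds 0)

/-- `R(q; ϑ, γ)`, the limit (supremum) of the nondecreasing sequence of products
`(∑_{i=0}^n q_i (ϑ_{i+1} - ϑ_i)) (γ_0 + ∑_{i=1}^n (1/q_i - 1/q_{i-1}) γ_i)`,
as an element of `[0, ∞]`. -/
noncomputable def Rlim (q ϑ γ : ℕ → ℝ) : ℝ≥0∞ :=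
  ⨆ n : ℕ, ENNReal.ofReal
    ((∑ i ∈ Finset.range (n + 1), q i * (ϑ (i + 1) - ϑ i)) *
      (γ 0 + ∑ i ∈ Finset.Icc 1 n, (1 / q i - 1 / q (i - 1)) * γ i))

/-- The slope sequence of `γ'` relative to the abscissae `ϑ`. -/
noncomputable def slopeSeq (ϑ γ' : ℕ → ℝ) : ℕ → ℝ :=
  fun i => (γ' (i + 1) - γ' i) / (ϑ (i + 1) - ϑ i)

/-!
The slopes `θ` of the hull `γ'` are negative, nondecreasing and tend to `0`, and `γ'` touches `γ`
wherever `θ` jumps (otherwise `γ'` could be raised there). By summation by parts the second factor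
of `R(q)` is at least `∑_{i<n} (γ'_i - γ'_{i+1}) / q_i`, so Cauchy–Schwarz against the first
factor bounds every partial product below by `(∑_{i<n} √((γ'_i - γ'_{i+1})(ϑ_{i+1} - ϑ_i)))²`.
For `q* ∝ √(-θ)` both factors are explicit: `q*` is constant between kinks, where `γ = γ'`, and the
boundary term `γ'_n / q*_n` is bounded by `√(-θ_0)` times the tail of the series, because
`γ'_i - γ'_{i+1} = √(-θ_i) · √((γ'_i - γ'_{i+1})(ϑ_{i+1} - ϑ_i))` and `√(-θ)` decreases.
-/

open Finset Topology Function

section Slopes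

variable {ϑ : ℕ → ℝ}

lemma slopeSeq_mul_sub (hϑ : StrictMono ϑ) (f : ℕ → ℝ) (i : ℕ) :
    slopeSeq ϑ f i * (ϑ (i + 1) - ϑ i) = f (i + 1) - f i :=
  div_mul_cancel₀ _ (sub_pos.2 (hϑ i.lt_succ_self)).ne'

lemma succ_le_of_slopeSeq_nonpos (hϑ : StrictMono ϑ) {f : ℕ → ℝ} {i : ℕ}
    (hθ : slopeSeq ϑ f i ≤ 0) : f (i + 1) ≤ f i := by
  have := mul_nonpos_of_nonpos_of_nonneg hθ (sub_pos.2 (hϑ i.lt_succ_self)).le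
  linarith [slopeSeq_mul_sub hϑ f i]

lemma sum_Ico_slopeSeq_mul (hϑ : StrictMono ϑ) (f : ℕ → ℝ) {m n : ℕ} (h : m ≤ n) :
    ∑ i ∈ Ico m n, slopeSeq ϑ f i * (ϑ (i + 1) - ϑ i) = f n - f m := by
  simp only [slopeSeq_mul_sub hϑ, sum_Ico_sub f h]

lemma add_slopeSeq_mul_le (hϑ : StrictMono ϑ) {f : ℕ → ℝ} (hf : Monotone (slopeSeq ϑ f))
    {m n : ℕ} (h : m ≤ n) : f m + slopeSeq ϑ f m * (ϑ n - ϑ m) ≤ f n := by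
  have : slopeSeq ϑ f m * (ϑ n - ϑ m) ≤ f n - f m := by
    rw [← sum_Ico_slopeSeq_mul hϑ f h, ← sum_Ico_sub ϑ h, mul_sum]
    exact sum_le_sum fun i hi => mul_le_mul_of_nonneg_right (hf (mem_Ico.1 hi).1)
      (sub_nonneg.2 (hϑ.monotone i.le_succ))
  linarith

lemma sub_le_mul_of_slopeSeq_le (hϑ : StrictMono ϑ) {f : ℕ → ℝ} {c : ℝ}
    (hc : ∀ i, slopeSeq ϑ f i ≤ c) (n : ℕ) : f n - f 0 ≤ c * (ϑ n - ϑ 0) := by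
  rw [← sum_Ico_slopeSeq_mul hϑ f n.zero_le, ← sum_Ico_sub ϑ n.zero_le, mul_sum]
  exact sum_le_sum fun i _ => mul_le_mul_of_nonneg_right (hc i)
    (sub_nonneg.2 (hϑ.monotone i.le_succ))

lemma slopeSeq_nonpos_of_tendsto (hϑ : StrictMono ϑ) (hϑtop : Tendsto ϑ atTop atTop)
    {f : ℕ → ℝ} {ℓ : ℝ} (hf : Monotone (slopeSeq ϑ f)) (hlim : Tendsto f atTop (𝓝 ℓ))
    (m : ℕ) : slopeSeq ϑ f m ≤ 0 := by
  by_contra! hpos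
  have hline : Tendsto (fun n => f m + slopeSeq ϑ f m * (ϑ n - ϑ m)) atTop atTop :=
    tendsto_atTop_add_const_left _ _ <|
      (tendsto_atTop_add_const_right _ _ hϑtop).const_mul_atTop hpos
  exact not_tendsto_atTop_of_tendsto_nhds hlim <| tendsto_atTop_mono'
    _ ((eventually_ge_atTop m).mono fun n hn => add_slopeSeq_mul_le hϑ hf hn) hline

lemma tendsto_slopeSeq_of_tendsto (hϑ : StrictMono ϑ) (hϑtop : Tendsto ϑ atTop atTop)
    {f : ℕ → ℝ} {ℓ : ℝ} (hf : Monotone (slopeSeq ϑ f)) (hlim : Tendsto f atTop (𝓝 ℓ)) :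
    Tendsto (slopeSeq ϑ f) atTop (𝓝 0) := by
  have hnonpos := slopeSeq_nonpos_of_tendsto hϑ hϑtop hf hlim
  have hbdd : BddAbove (Set.range (slopeSeq ϑ f)) := ⟨0, Set.forall_mem_range.2 hnonpos⟩
  obtain ⟨L, hL⟩ : ∃ L, L = ⨆ i, slopeSeq ϑ f i := ⟨_, rfl⟩
  have hsup : Tendsto (slopeSeq ϑ f) atTop (𝓝 L) := hL ▸ tendsto_atTop_ciSup hf hbdd
  suffices L = 0 by rwa [this] at hsup
  refine le_antisymm (hL ▸ ciSup_le hnonpos) (not_lt.1 fun hneg => ?_)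
  -- slopes bounded by `L < 0` would push `f` down to `-∞`
  have hline : Tendsto (fun n => f 0 + L * (ϑ n - ϑ 0)) atTop atBot :=
    tendsto_atBot_add_const_left _ _ <|
      (tendsto_atTop_add_const_right _ _ hϑtop).const_mul_atTop_of_neg hneg
  refine not_tendsto_atBot_of_tendsto_nhds hlim (tendsto_atBot_mono (fun n => ?_) hline)
  linarith [sub_le_mul_of_slopeSeq_le hϑ (fun i => hL ▸ le_ciSup hbdd i) n]

lemma monotone_slopeSeq_update (hϑ : StrictMono ϑ) {f : ℕ → ℝ} (hf : Monotone (slopeSeq ϑ f))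
    {j : ℕ} {v : ℝ} (hv : f j ≤ v)
    (hj : ∀ k, k + 1 = j → slopeSeq ϑ (update f j v) k ≤ slopeSeq ϑ (update f j v) j) :
    Monotone (slopeSeq ϑ (update f j v)) := by
  have hd : ∀ i, 0 < ϑ (i + 1) - ϑ i := fun i => sub_pos.2 (hϑ i.lt_succ_self)
  have hfar : ∀ k, k ≠ j → k + 1 ≠ j → slopeSeq ϑ (update f j v) k = slopeSeq ϑ f k :=
    fun k hk hk' => by simp only [slopeSeq, update_of_ne hk, update_of_ne hk']
  have hright : slopeSeq ϑ (update f j v) j ≤ slopeSeq ϑ f j := by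
    simp only [slopeSeq, update_self, update_of_ne (j.succ_ne_self)]
    exact div_le_div_of_nonneg_right (by linarith) (hd j).le
  have hleft : ∀ k, k + 1 = j → slopeSeq ϑ f k ≤ slopeSeq ϑ (update f j v) k := by
    rintro k rfl
    simp only [slopeSeq, update_self, update_of_ne (k.succ_ne_self.symm)]
    exact div_le_div_of_nonneg_right (by linarith) (hd k).le
  refine monotone_nat_of_le_succ fun k => ?_
  by_cases h1 : k + 1 = j
  · exact h1 ▸ hj k h1
  by_cases h0 : k = j
  · subst h0
    rw [hfar (k + 1) (by omega) (by omega)]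
    exact hright.trans (hf k.le_succ)
  rw [hfar k h0 h1]
  by_cases h2 : k + 2 = j
  · exact (hf k.le_succ).trans (hleft (k + 1) h2)
  · rw [hfar (k + 1) h1 h2]
    exact hf k.le_succ

end Slopes

structure IsLowerHull (ϑ γ γ' : ℕ → ℝ) : Prop where
  le : ∀ n, γ' n ≤ γ n
  monotone_slopeSeq : Monotone (slopeSeq ϑ γ')
  minorant_le : ∀ δ : ℕ → ℝ, (∀ n, δ n ≤ γ n) → Monotone (slopeSeq ϑ δ) → ∀ n, δ n ≤ γ' n

namespace IsLowerHull

variable {ϑ γ γ' : ℕ → ℝ}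

lemma zero_eq (h : IsLowerHull ϑ γ γ') (hϑ : StrictMono ϑ) : γ' 0 = γ 0 := by
  refine (h.le 0).antisymm ?_
  have hδ : ∀ n, update γ' 0 (γ 0) n ≤ γ n := fun n => by
    rcases eq_or_ne n 0 with rfl | hn
    · simp
    · simpa [hn] using h.le n
  simpa using h.minorant_le _ hδ
    (monotone_slopeSeq_update hϑ h.monotone_slopeSeq (h.le 0) (by omega)) 0

lemma nonneg (h : IsLowerHull ϑ γ γ') (hγ : ∀ n, 0 ≤ γ n) (n : ℕ) : 0 ≤ γ' n :=
  h.minorant_le (fun _ => 0) hγ (fun i j _ => by simp [slopeSeq]) n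

lemma tendsto_zero (h : IsLowerHull ϑ γ γ') (hγ : ∀ n, 0 ≤ γ n)
    (hlim : Tendsto γ atTop (𝓝 0)) : Tendsto γ' atTop (𝓝 0) :=
  tendsto_of_tendsto_of_tendsto_of_le_of_le tendsto_const_nhds hlim (h.nonneg hγ) h.le

lemma eq_of_slopeSeq_lt (h : IsLowerHull ϑ γ γ') (hϑ : StrictMono ϑ) {i : ℕ}
    (hlt : slopeSeq ϑ γ' i < slopeSeq ϑ γ' (i + 1)) : γ' (i + 1) = γ (i + 1) := by
  refine (h.le _).antisymm (not_lt.1 fun hgap => ?_)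
  -- raising `γ'` at the kink by a small `ε` keeps its slopes monotone and stays below `γ`
  have hev : ∀ᶠ ε in 𝓝 0,
      slopeSeq ϑ γ' i + ε / (ϑ (i + 1) - ϑ i) <
        slopeSeq ϑ γ' (i + 1) - ε / (ϑ (i + 2) - ϑ (i + 1)) ∧
      ε < γ (i + 1) - γ' (i + 1) := by
    refine (Tendsto.eventually_lt ?_ ?_ hlt).and (eventually_lt_nhds (sub_pos.2 hgap))
    · simpa using tendsto_const_nhds.add ((tendsto_id (x := 𝓝 (0 : ℝ))).div_const _)
    · simpa using tendsto_const_nhds.sub ((tendsto_id (x := 𝓝 (0 : ℝ))).div_const _)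
  obtain ⟨ε, ⟨hslope, hsmall⟩, hε : 0 < ε⟩ :=
    ((hev.filter_mono nhdsWithin_le_nhds).and (self_mem_nhdsWithin (s := Set.Ioi 0))).exists
  set δ := update γ' (i + 1) (γ' (i + 1) + ε)
  have hδ : ∀ n, δ n ≤ γ n := fun n => by
    rcases eq_or_ne n (i + 1) with rfl | hn
    · simp only [δ, update_self]; linarith
    · simpa [δ, hn] using h.le n
  have hδ₀ : slopeSeq ϑ δ i = slopeSeq ϑ γ' i + ε / (ϑ (i + 1) - ϑ i) := by
    simp only [δ, slopeSeq, update_self, update_of_ne i.succ_ne_self.symm]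
    ring
  have hδ₁ : slopeSeq ϑ δ (i + 1) = slopeSeq ϑ γ' (i + 1) - ε / (ϑ (i + 2) - ϑ (i + 1)) := by
    simp only [δ, slopeSeq, update_self, update_of_ne (i + 1).succ_ne_self]
    ring
  have hmono : Monotone (slopeSeq ϑ δ) :=
    monotone_slopeSeq_update hϑ h.monotone_slopeSeq (by linarith) fun k hk => by
      obtain rfl : k = i := by omega
      rw [hδ₀, hδ₁]
      exact hslope.le
  have := h.minorant_le δ hδ hmono (i + 1)
  simp only [δ, update_self] at this
  linarith

lemma pos (h : IsLowerHull ϑ γ γ') (hϑ : StrictMono ϑ) (hγ : ∀ n, 0 < γ n) (n : ℕ) :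
    0 < γ' n := by
  classical
  have hnn := h.nonneg fun n => (hγ n).le
  by_contra! hn
  have hzero : ∃ n, γ' n = 0 := ⟨n, le_antisymm hn (hnn n)⟩
  -- at the first zero of `γ'` its slopes jump from negative to nonnegative, so `γ'` touches `γ`
  obtain ⟨k, hk⟩ : ∃ k, Nat.find hzero = k + 1 := Nat.exists_eq_succ_of_ne_zero fun h0 => by
    have := Nat.find_spec hzero
    rw [h0, h.zero_eq hϑ] at this
    exact (hγ 0).ne' this
  have hzk : γ' (k + 1) = 0 := hk ▸ Nat.find_spec hzero
  have hposk : 0 < γ' k := (hnn k).lt_of_ne' (Nat.find_min hzero (by omega))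
  have hd : ∀ i, 0 < ϑ (i + 1) - ϑ i := fun i => sub_pos.2 (hϑ i.lt_succ_self)
  have hlt : slopeSeq ϑ γ' k < slopeSeq ϑ γ' (k + 1) := by
    refine (div_neg_of_neg_of_pos (by linarith) (hd k)).trans_le (div_nonneg ?_ (hd _).le)
    linarith [hnn (k + 1 + 1)]
  have := h.eq_of_slopeSeq_lt hϑ hlt
  rw [hzk] at this
  exact (hγ (k + 1)).ne this

lemma slopeSeq_neg (h : IsLowerHull ϑ γ γ') (hϑ : StrictMono ϑ) (hϑtop : Tendsto ϑ atTop atTop)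
    (hγ : ∀ n, 0 < γ n) (hlim : Tendsto γ atTop (𝓝 0)) (m : ℕ) : slopeSeq ϑ γ' m < 0 := by
  have hlim' := h.tendsto_zero (fun n => (hγ n).le) hlim
  refine (slopeSeq_nonpos_of_tendsto hϑ hϑtop h.monotone_slopeSeq hlim' m).lt_of_ne fun h0 => ?_
  have : γ' m ≤ 0 := ge_of_tendsto hlim' <| eventually_atTop.2 ⟨m, fun n hn => by
    simpa [h0] using add_slopeSeq_mul_le hϑ h.monotone_slopeSeq hn⟩
  exact (h.pos hϑ hγ m).not_ge this

end IsLowerHull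

noncomputable def thetaSum (q ϑ : ℕ → ℝ) (n : ℕ) : ℝ :=
  ∑ i ∈ range (n + 1), q i * (ϑ (i + 1) - ϑ i)

noncomputable def gammaSum (q γ : ℕ → ℝ) (n : ℕ) : ℝ :=
  γ 0 + ∑ i ∈ Icc 1 n, (1 / q i - 1 / q (i - 1)) * γ i

lemma Rlim_eq_iSup (q ϑ γ : ℕ → ℝ) :
    Rlim q ϑ γ = ⨆ n, ENNReal.ofReal (thetaSum q ϑ n * gammaSum q γ n) :=
  rfl

noncomputable def dropMean (ϑ g : ℕ → ℝ) (i : ℕ) : ℝ :=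
  √((g i - g (i + 1)) * (ϑ (i + 1) - ϑ i))

section Weights

variable {q : ℕ → ℝ}

lemma gammaSum_eq_div_add_sum (hq0 : q 0 = 1) (g : ℕ → ℝ) (n : ℕ) :
    gammaSum q g n = g n / q n + ∑ i ∈ range n, (g i - g (i + 1)) / q i := by
  induction n with
  | zero => simp [gammaSum, hq0]
  | succ n ih =>
    rw [gammaSum, sum_Icc_succ_top (by omega), ← add_assoc, ← gammaSum, ih, sum_range_succ,
      Nat.add_sub_cancel]
    ring

lemma gammaSum_mono (hqa : ∀ i, q (i + 1) ≤ q i) (hqpos : ∀ i, 0 < q i) {g γ : ℕ → ℝ}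
    (h : ∀ n, g n ≤ γ n) (n : ℕ) : gammaSum q g n ≤ gammaSum q γ n := by
  refine add_le_add (h 0) (sum_le_sum fun i hi => mul_le_mul_of_nonneg_left (h i) ?_)
  obtain ⟨j, rfl⟩ : ∃ j, i = j + 1 := ⟨i - 1, by grind⟩
  rw [Nat.add_sub_cancel, sub_nonneg]
  exact one_div_le_one_div_of_le (hqpos _) (hqa j)

variable {ϑ g γ : ℕ → ℝ}

lemma sq_sum_dropMean_le (hϑ : Monotone ϑ) (hg : ∀ i, g (i + 1) ≤ g i) (hg0 : ∀ n, 0 ≤ g n)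
    (hgγ : ∀ n, g n ≤ γ n) (hq0 : q 0 = 1) (hqa : ∀ i, q (i + 1) ≤ q i)
    (hqpos : ∀ i, 0 < q i) (n : ℕ) :
    (∑ i ∈ range n, dropMean ϑ g i) ^ 2 ≤ thetaSum q ϑ n * gammaSum q γ n := by
  have hd : ∀ i, 0 ≤ ϑ (i + 1) - ϑ i := fun i => sub_nonneg.2 (hϑ i.le_succ)
  have hdrop : ∀ i, 0 ≤ (g i - g (i + 1)) / q i := fun i =>
    div_nonneg (sub_nonneg.2 (hg i)) (hqpos i).le
  have hlen : ∀ i, 0 ≤ q i * (ϑ (i + 1) - ϑ i) := fun i => mul_nonneg (hqpos i).le (hd i)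
  have hcs : (∑ i ∈ range n, dropMean ϑ g i) ^ 2 ≤
      (∑ i ∈ range n, q i * (ϑ (i + 1) - ϑ i)) * ∑ i ∈ range n, (g i - g (i + 1)) / q i :=
    sum_sq_le_sum_mul_sum_of_sq_le_mul _ (fun i _ => hlen i) (fun i _ => hdrop i) fun i _ => by
      rw [dropMean, Real.sq_sqrt (mul_nonneg (sub_nonneg.2 (hg i)) (hd i))]
      field_simp [(hqpos i).ne']
      rfl
  calc _ ≤ _ := hcs
    _ ≤ thetaSum q ϑ n * gammaSum q g n := by
      refine mul_le_mul ?_ ?_ (sum_nonneg fun i _ => hdrop i) (sum_nonneg fun i _ => hlen i)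
      · rw [thetaSum, sum_range_succ]
        exact le_add_of_nonneg_right (hlen n)
      · rw [gammaSum_eq_div_add_sum hq0]
        exact le_add_of_nonneg_left (div_nonneg (hg0 n) (hqpos n).le)
    _ ≤ thetaSum q ϑ n * gammaSum q γ n :=
      mul_le_mul_of_nonneg_left (gammaSum_mono hqa hqpos hgγ n)
        (sum_nonneg fun i _ => hlen i)

end Weights

section LowerBound

variable {q ϑ g γ : ℕ → ℝ}

lemma ofReal_sq_sum_dropMean_le_Rlim (hϑ : Monotone ϑ) (hg : ∀ i, g (i + 1) ≤ g i)
    (hg0 : ∀ n, 0 ≤ g n) (hgγ : ∀ n, g n ≤ γ n) (hq : memA q) (n : ℕ) :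
    ENNReal.ofReal ((∑ i ∈ range n, dropMean ϑ g i) ^ 2) ≤ Rlim q ϑ γ :=
  (ENNReal.ofReal_le_ofReal (sq_sum_dropMean_le hϑ hg hg0 hgγ hq.1 hq.2.1 hq.2.2.1 n)).trans
    (le_iSup (fun n => ENNReal.ofReal (thetaSum q ϑ n * gammaSum q γ n)) n)

lemma summable_dropMean (hϑ : Monotone ϑ) (hg : ∀ i, g (i + 1) ≤ g i) (hg0 : ∀ n, 0 ≤ g n)
    (hgγ : ∀ n, g n ≤ γ n) (hq : memA q) (hfin : Rlim q ϑ γ ≠ ⊤) :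
    Summable (dropMean ϑ g) := by
  refine summable_of_sum_range_le (c := √(Rlim q ϑ γ).toReal) (fun _ => Real.sqrt_nonneg _)
    fun n => (Real.le_sqrt (sum_nonneg fun _ _ => Real.sqrt_nonneg _) ENNReal.toReal_nonneg).2 ?_
  exact (ENNReal.ofReal_le_iff_le_toReal hfin).1
    (ofReal_sq_sum_dropMean_le_Rlim hϑ hg hg0 hgγ hq n)

lemma ofReal_sq_tsum_dropMean_le_Rlim (hϑ : Monotone ϑ) (hg : ∀ i, g (i + 1) ≤ g i)
    (hg0 : ∀ n, 0 ≤ g n) (hgγ : ∀ n, g n ≤ γ n) (hs : Summable (dropMean ϑ g)) (hq : memA q) :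
    ENNReal.ofReal ((∑' i, dropMean ϑ g i) ^ 2) ≤ Rlim q ϑ γ :=
  le_of_tendsto'
    ((ENNReal.continuous_ofReal.tendsto _).comp (hs.hasSum.tendsto_sum_nat.pow 2))
    (ofReal_sq_sum_dropMean_le_Rlim hϑ hg hg0 hgγ hq)

end LowerBound

section OptimalWeight

lemma sqrt_div_of_nonpos {x : ℝ} (hx : x ≤ 0) (y : ℝ) : √(x / y) = √(-x) / √(-y) := by
  rw [← neg_div_neg_eq, Real.sqrt_div (neg_nonneg.2 hx)]

lemma memA_sqrt_div {θ : ℕ → ℝ} (hneg : ∀ i, θ i < 0) (hmono : Monotone θ)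
    (hlim : Tendsto θ atTop (𝓝 0)) : memA (fun i => √(θ i / θ 0)) := by
  refine ⟨by simp [div_self (hneg 0).ne], fun i => ?_, fun i => ?_, ?_⟩
  · exact Real.sqrt_le_sqrt (div_le_div_of_nonpos_of_le (hneg 0).le (hmono i.le_succ))
  · exact Real.sqrt_pos.2 (div_pos_of_neg_of_neg (hneg i) (hneg 0))
  · simpa using (hlim.div_const (θ 0)).sqrt

variable {ϑ g : ℕ → ℝ}

lemma dropMean_eq (hϑ : StrictMono ϑ) {i : ℕ} (hθ : slopeSeq ϑ g i ≤ 0) :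
    dropMean ϑ g i = √(-slopeSeq ϑ g i) * (ϑ (i + 1) - ϑ i) := by
  have hd : 0 ≤ ϑ (i + 1) - ϑ i := sub_nonneg.2 (hϑ i.lt_succ_self).le
  rw [dropMean, show (g i - g (i + 1)) * (ϑ (i + 1) - ϑ i) =
      -slopeSeq ϑ g i * ((ϑ (i + 1) - ϑ i) * (ϑ (i + 1) - ϑ i)) by
    linear_combination (ϑ (i + 1) - ϑ i) * slopeSeq_mul_sub hϑ g i,
    Real.sqrt_mul (neg_nonneg.2 hθ), Real.sqrt_mul_self hd]

lemma sub_succ_eq_sqrt_mul_dropMean (hϑ : StrictMono ϑ) {i : ℕ} (hθ : slopeSeq ϑ g i ≤ 0) :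
    g i - g (i + 1) = √(-slopeSeq ϑ g i) * dropMean ϑ g i := by
  rw [dropMean_eq hϑ hθ, ← mul_assoc, Real.mul_self_sqrt (neg_nonneg.2 hθ)]
  linarith [slopeSeq_mul_sub hϑ g i]

lemma le_sqrt_mul_tsum_dropMean (hϑ : StrictMono ϑ) (hmono : Monotone (slopeSeq ϑ g))
    (hθ : ∀ i, slopeSeq ϑ g i ≤ 0) (hlim : Tendsto g atTop (𝓝 0))
    (hs : Summable (dropMean ϑ g)) (n : ℕ) :
    g n ≤ √(-slopeSeq ϑ g n) * ∑' i, dropMean ϑ g (i + n) := by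
  have htel : HasSum (fun i => g (i + n) - g (i + n + 1)) (g n) := by
    refine (hasSum_iff_tendsto_nat_of_nonneg (fun i => ?_) _).2 ?_
    · rw [sub_succ_eq_sqrt_mul_dropMean hϑ (hθ _)]
      exact mul_nonneg (Real.sqrt_nonneg _) (Real.sqrt_nonneg _)
    · have hpartial : ∀ k, ∑ i ∈ range k, (g (i + n) - g (i + n + 1)) = g n - g (k + n) :=
        fun k => by simpa only [Nat.add_right_comm, zero_add] using sum_range_sub' (g <| · + n) k
      simp_rw [hpartial]
      simpa using tendsto_const_nhds.sub (hlim.comp (tendsto_add_atTop_nat n))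
  refine hasSum_le (fun i => ?_) htel (((summable_nat_add_iff n).2 hs).hasSum.mul_left _)
  rw [sub_succ_eq_sqrt_mul_dropMean hϑ (hθ _)]
  exact mul_le_mul_of_nonneg_right (Real.sqrt_le_sqrt (neg_le_neg (hmono (by omega))))
    (Real.sqrt_nonneg _)

lemma thetaSum_sqrt_div (hϑ : StrictMono ϑ) (hθ : ∀ i, slopeSeq ϑ g i ≤ 0) (n : ℕ) :
    thetaSum (fun i => √(slopeSeq ϑ g i / slopeSeq ϑ g 0)) ϑ n =
      (∑ i ∈ range (n + 1), dropMean ϑ g i) / √(-slopeSeq ϑ g 0) := by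
  rw [thetaSum, sum_div]
  refine sum_congr rfl fun i _ => ?_
  rw [sqrt_div_of_nonpos (hθ i), dropMean_eq hϑ (hθ i)]
  ring

lemma gammaSum_sqrt_div (hϑ : StrictMono ϑ) (hθ : ∀ i, slopeSeq ϑ g i < 0) (n : ℕ) :
    gammaSum (fun i => √(slopeSeq ϑ g i / slopeSeq ϑ g 0)) g n =
      g n / √(slopeSeq ϑ g n / slopeSeq ϑ g 0) +
        √(-slopeSeq ϑ g 0) * ∑ i ∈ range n, dropMean ϑ g i := by
  rw [gammaSum_eq_div_add_sum (by simp [div_self (hθ 0).ne]), mul_sum]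
  congr 1
  refine sum_congr rfl fun i _ => ?_
  have hr : 0 < √(-slopeSeq ϑ g i) := Real.sqrt_pos.2 (neg_pos.2 (hθ i))
  rw [sqrt_div_of_nonpos (hθ i).le, sub_succ_eq_sqrt_mul_dropMean hϑ (hθ i).le]
  field_simp

end OptimalWeight

namespace IsLowerHull

variable {ϑ γ γ' : ℕ → ℝ}

lemma gammaSum_sqrt_div_congr (h : IsLowerHull ϑ γ γ') (hϑ : StrictMono ϑ) (n : ℕ) :
    gammaSum (fun i => √(slopeSeq ϑ γ' i / slopeSeq ϑ γ' 0)) γ n =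
      gammaSum (fun i => √(slopeSeq ϑ γ' i / slopeSeq ϑ γ' 0)) γ' n := by
  rw [gammaSum, gammaSum, h.zero_eq hϑ]
  congr 1
  refine sum_congr rfl fun i hi => ?_
  obtain ⟨j, rfl⟩ : ∃ j, i = j + 1 := ⟨i - 1, by grind⟩
  -- where the slope does not jump the weight is constant, and where it jumps `γ' = γ`
  rcases (h.monotone_slopeSeq j.le_succ).eq_or_lt with heq | hlt
  · simp [heq]
  · rw [h.eq_of_slopeSeq_lt hϑ hlt]

lemma Rlim_sqrt_div_le (h : IsLowerHull ϑ γ γ') (hϑ : StrictMono ϑ)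
    (hneg : ∀ i, slopeSeq ϑ γ' i < 0) (hlim : Tendsto γ' atTop (𝓝 0))
    (hs : Summable (dropMean ϑ γ')) :
    Rlim (fun i => √(slopeSeq ϑ γ' i / slopeSeq ϑ γ' 0)) ϑ γ ≤
      ENNReal.ofReal ((∑' i, dropMean ϑ γ' i) ^ 2) := by
  rw [Rlim_eq_iSup]
  refine iSup_le fun n => ENNReal.ofReal_le_ofReal ?_
  rw [thetaSum_sqrt_div hϑ fun i => (hneg i).le, h.gammaSum_sqrt_div_congr hϑ,
    gammaSum_sqrt_div hϑ hneg]
  set θ := slopeSeq ϑ γ'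
  have hr : ∀ i, 0 < √(-θ i) := fun i => Real.sqrt_pos.2 (neg_pos.2 (hneg i))
  have hP : ∀ i, 0 ≤ dropMean ϑ γ' i := fun i => Real.sqrt_nonneg _
  have hθsum : (∑ i ∈ range (n + 1), dropMean ϑ γ' i) / √(-θ 0) ≤
      (∑' i, dropMean ϑ γ' i) / √(-θ 0) :=
    div_le_div_of_nonneg_right (hs.sum_le_tsum _ fun i _ => hP i) (hr 0).le
  have hγsum : γ' n / √(θ n / θ 0) + √(-θ 0) * ∑ i ∈ range n, dropMean ϑ γ' i ≤
      √(-θ 0) * ∑' i, dropMean ϑ γ' i := by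
    have htail : γ' n ≤ √(-θ n) * ∑' i, dropMean ϑ γ' (i + n) :=
      le_sqrt_mul_tsum_dropMean hϑ h.monotone_slopeSeq (fun i => (hneg i).le) hlim hs n
    rw [← hs.sum_add_tsum_nat_add n, mul_add, add_comm, sqrt_div_of_nonpos (hneg n).le,
      div_div_eq_mul_div]
    gcongr
    rw [div_le_iff₀ (hr n)]
    nlinarith [hr 0]
  calc _ ≤ (∑' i, dropMean ϑ γ' i) / √(-θ 0) * (√(-θ 0) * ∑' i, dropMean ϑ γ' i) :=
        mul_le_mul_of_nonneg hθsum hγsum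
          (div_nonneg (sum_nonneg fun i _ => hP i) (hr 0).le)
          (mul_nonneg (hr 0).le (tsum_nonneg hP))
    _ = (∑' i, dropMean ϑ γ' i) ^ 2 := by field_simp [(hr 0).ne']

end IsLowerHull

theorem stmt_17_general (ϑ γ γ' : ℕ → ℝ)
    (hϑmono : StrictMono ϑ)
    (hϑtop : Tendsto ϑ atTop atTop)
    (hγpos : ∀ n, 0 < γ n) (hγlim : Tendsto γ atTop (nhds 0))
    (hex : ∃ q, memA q ∧ Rlim q ϑ γ ≠ ⊤)
    -- `γ'` is the lower convex hull of `γ` relative to `ϑ`.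
    (hle : ∀ n, γ' n ≤ γ n)
    (hslope : Monotone (slopeSeq ϑ γ'))
    (hmax : ∀ δ : ℕ → ℝ, (∀ n, δ n ≤ γ n) → Monotone (slopeSeq ϑ δ) →
      ∀ n, δ n ≤ γ' n) :
    memA (fun i => Real.sqrt (slopeSeq ϑ γ' i / slopeSeq ϑ γ' 0)) ∧
      (∀ q, memA q →
        Rlim (fun i => Real.sqrt (slopeSeq ϑ γ' i / slopeSeq ϑ γ' 0)) ϑ γ ≤
          Rlim q ϑ γ) ∧
      Summable (fun i =>
        Real.sqrt ((γ' i - γ' (i + 1)) * (ϑ (i + 1) - ϑ i))) ∧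
      Rlim (fun i => Real.sqrt (slopeSeq ϑ γ' i / slopeSeq ϑ γ' 0)) ϑ γ =
        ENNReal.ofReal
          ((∑' i : ℕ, Real.sqrt ((γ' i - γ' (i + 1)) * (ϑ (i + 1) - ϑ i))) ^ 2) := by
  have h : IsLowerHull ϑ γ γ' := ⟨hle, hslope, hmax⟩
  have hneg := h.slopeSeq_neg hϑmono hϑtop hγpos hγlim
  have hlim := h.tendsto_zero (fun n => (hγpos n).le) hγlim
  have hanti : ∀ i, γ' (i + 1) ≤ γ' i := fun i => succ_le_of_slopeSeq_nonpos hϑmono (hneg i).le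
  have hnonneg := h.nonneg fun n => (hγpos n).le
  obtain ⟨q₀, hq₀, hfin⟩ := hex
  have hs := summable_dropMean hϑmono.monotone hanti hnonneg hle hq₀ hfin
  have hlow : ∀ q, memA q → ENNReal.ofReal ((∑' i, dropMean ϑ γ' i) ^ 2) ≤ Rlim q ϑ γ :=
    fun _ => ofReal_sq_tsum_dropMean_le_Rlim hϑmono.monotone hanti hnonneg hle hs
  have hqA := memA_sqrt_div hneg hslope (tendsto_slopeSeq_of_tendsto hϑmono hϑtop hslope hlim)
  have hopt := (h.Rlim_sqrt_div_le hϑmono hneg hlim hs).antisymm (hlow _ hqA)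
  exact ⟨hqA, fun q hq => hopt ▸ hlow q hq, hs, hopt⟩

theorem stmt_17 (ϑ γ γ' : ℕ → ℝ)
    (hϑ0 : ϑ 0 = 0) (hϑmono : StrictMono ϑ)
    (hϑtop : Tendsto ϑ atTop atTop)
    (hγpos : ∀ n, 0 < γ n) (hγlim : Tendsto γ atTop (nhds 0))
    (hex : ∃ q, memA q ∧ Rlim q ϑ γ ≠ ⊤)
    -- `γ'` is the lower convex hull of `γ` relative to `ϑ`.
    (hle : ∀ n, γ' n ≤ γ n)
    (hslope : Monotone (slopeSeq ϑ γ'))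
    (hmax : ∀ δ : ℕ → ℝ, (∀ n, δ n ≤ γ n) → Monotone (slopeSeq ϑ δ) →
      ∀ n, δ n ≤ γ' n) :
    memA (fun i => Real.sqrt (slopeSeq ϑ γ' i / slopeSeq ϑ γ' 0)) ∧
      (∀ q, memA q →
        Rlim (fun i => Real.sqrt (slopeSeq ϑ γ' i / slopeSeq ϑ γ' 0)) ϑ γ ≤
          Rlim q ϑ γ) ∧
      Summable (fun i =>
        Real.sqrt ((γ' i - γ' (i + 1)) * (ϑ (i + 1) - ϑ i))) ∧
      Rlim (fun i => Real.sqrt (slopeSeq ϑ γ' i / slopeSeq ϑ γ' 0)) ϑ γ =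
        ENNReal.ofReal
          ((∑' i : ℕ, Real.sqrt ((γ' i - γ' (i + 1)) * (ϑ (i + 1) - ϑ i))) ^ 2) :=
  stmt_17_general ϑ γ γ' hϑmono hϑtop hγpos hγlim hex hle hslope hmax
end
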